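/- arXiv:1208.1936 — 5 statements merged into one kernel-verified Lean document; each statement's English description precedes it below -/
import Mathlib

section
/- Let Γ be a finite-index subgroup of SL(2,ℤ) and let l be its Wohlfahrt level. Then for every positive integer m, the deficiency f_{Γ,l} divides the deficiency f_{Γ,m}; in particular the deficiency f_{Γ,m} attains its minimal value when m = l. -/
open Matrix Matrix.SpecialLinearGroup

variable {R : Type*} [CommRing R]

/-- elementary matrix !![1,x;0,1] in SL2 -/
def EE12 (x : R) : SpecialLinearGroup (Fin 2) R :=
  ⟨!![1, x; 0, 1], by simp [Matrix.det_fin_two_of]⟩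

def EE21 (x : R) : SpecialLinearGroup (Fin 2) R :=
  ⟨!![1, 0; x, 1], by simp [Matrix.det_fin_two_of]⟩

def DD (u : Rˣ) : SpecialLinearGroup (Fin 2) R :=
  ⟨!![(u : R), 0; 0, ((u⁻¹ : Rˣ) : R)], by simp [Matrix.det_fin_two_of]⟩

lemma EE12_mul (x y : R) : EE12 x * EE12 y = EE12 (x + y) := by
  ext i j
  simp only [Matrix.SpecialLinearGroup.coe_mul]
  simp [EE12, Matrix.mul_fin_two]
  fin_cases i <;> fin_cases j <;> simp <;> ring

lemma DD_eq_prod (u : Rˣ) :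
    DD u = EE12 ((u : R) - 1) * (EE12 1 * EE21 (1 - ((u⁻¹ : Rˣ) : R)) * EE12 (-1)) *
      (EE12 1 * (EE21 (-1) * EE12 ((u : R) - 1) * EE21 1) * EE12 (-1)) := by
  have hab : (u : R) * ((u⁻¹ : Rˣ) : R) = 1 := u.mul_inv
  ext i j
  simp only [Matrix.SpecialLinearGroup.coe_mul]
  fin_cases i <;> fin_cases j <;>
    simp [DD, EE12, EE21, Matrix.mul_fin_two, Fin.mk_zero, Fin.mk_one]
  · linear_combination (u : R) * hab
  · linear_combination (-1 : R) * hab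
  · linear_combination hab

lemma EE12_zero : (EE12 (0 : R)) = 1 := by
  ext i j
  fin_cases i <;> fin_cases j <;> simp [EE12, Fin.mk_zero, Fin.mk_one]

lemma EE21_mul (x y : R) : EE21 x * EE21 y = EE21 (x + y) := by
  ext i j
  simp only [Matrix.SpecialLinearGroup.coe_mul]
  fin_cases i <;> fin_cases j <;>
    simp [EE21, Matrix.mul_fin_two, Fin.mk_zero, Fin.mk_one] <;> ring

lemma EE21_zero : (EE21 (0 : R)) = 1 := by
  ext i j
  fin_cases i <;> fin_cases j <;> simp [EE21, Fin.mk_zero, Fin.mk_one]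

lemma EE12_inv (x : R) : (EE12 x)⁻¹ = EE12 (-x) := by
  apply inv_eq_of_mul_eq_one_right
  rw [EE12_mul, add_neg_cancel, EE12_zero]

lemma EE21_inv (x : R) : (EE21 x)⁻¹ = EE21 (-x) := by
  apply inv_eq_of_mul_eq_one_right
  rw [EE21_mul, add_neg_cancel, EE21_zero]

lemma LDU (M : Matrix.SpecialLinearGroup (Fin 2) R) (u : Rˣ) (h : M.1 0 0 = u) :
    M = EE21 (M.1 1 0 * ((u⁻¹ : Rˣ) : R)) * DD u * EE12 (((u⁻¹ : Rˣ) : R) * M.1 0 1) := by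
  have hab : (u : R) * ((u⁻¹ : Rˣ) : R) = 1 := u.mul_inv
  have hdet : (u : R) * M.1 1 1 - M.1 0 1 * M.1 1 0 = 1 := by
    rw [← h, ← Matrix.det_fin_two]; exact M.2
  ext i j
  simp only [Matrix.SpecialLinearGroup.coe_mul]
  fin_cases i <;> fin_cases j <;>
    simp [EE12, EE21, DD, Matrix.mul_fin_two, Fin.mk_zero, Fin.mk_one, h]
  all_goals first
    | linear_combination hab
    | linear_combination ((u⁻¹ : Rˣ) : R) * hdet - M.1 1 1 * hab

lemma exists_unit_add {k : ℕ} [NeZero k] (u w : ZMod k) (h : IsCoprime u w) :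
    ∃ t : ZMod k, IsUnit (u + w * t) := by
  set g : ℕ := Nat.gcd w.val k with hgdef
  have hgk : g ∣ k := Nat.gcd_dvd_right _ _
  haveI : NeZero g := ⟨fun h0 => NeZero.ne k (Nat.eq_zero_of_gcd_eq_zero_right h0)⟩
  set φ : ZMod k →+* ZMod g := ZMod.castHom hgk (ZMod g) with hφ
  have hwval : ((w.val : ℕ) : ZMod k) = w := ZMod.natCast_rightInverse w
  have hw0 : φ w = 0 := by
    rw [← hwval, map_natCast]
    exact (ZMod.natCast_eq_zero_iff _ _).mpr (Nat.gcd_dvd_left _ _)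
  have hu : IsUnit (φ u) := by
    have := h.map φ
    rw [hw0] at this
    exact isCoprime_zero_right.mp this
  obtain ⟨U, hU⟩ := ZMod.unitsMap_surjective hgk hu.unit
  have hUu : φ ((U : ZMod k) - u) = 0 := by
    have : φ (U : ZMod k) = φ u := by
      have := congrArg (Units.val) hU
      have h2 : (((U : ZMod k)).cast : ZMod g) = φ u := by simpa [ZMod.unitsMap_def] using this
      exact h2
    rw [map_sub, this, sub_self]
  -- write U - u = g * c
  obtain ⟨c, hc⟩ : ∃ c : ZMod k, (U : ZMod k) - u = (g : ZMod k) * c := by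
    set x := (U : ZMod k) - u with hx
    have hxval : ((x.val : ℕ) : ZMod k) = x := ZMod.natCast_rightInverse x
    have : ((x.val : ℕ) : ZMod g) = 0 := by
      rw [← map_natCast φ x.val, hxval]; exact hUu
    obtain ⟨c, hc⟩ := (ZMod.natCast_eq_zero_iff _ _).mp this
    exact ⟨(c : ZMod k), by rw [← hxval, hc]; push_cast; ring⟩
  -- Bezout: g = w * A mod k
  have hbez : (g : ZMod k) = w * ((Nat.gcdA w.val k : ℤ) : ZMod k) := by
    have := Nat.gcd_eq_gcd_ab w.val k
    have h2 : ((g : ℤ) : ZMod k) = (((w.val : ℤ) * Nat.gcdA w.val k + (k : ℤ) * Nat.gcdB w.val k : ℤ) : ZMod k) := by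
      exact_mod_cast congrArg (fun z : ℤ => (z : ZMod k)) this
    push_cast at h2
    rw [ZMod.natCast_self] at h2
    rw [hwval] at h2
    simpa using h2
  refine ⟨((Nat.gcdA w.val k : ℤ) : ZMod k) * c, ?_⟩
  have : u + w * (((Nat.gcdA w.val k : ℤ) : ZMod k) * c) = (U : ZMod k) := by
    rw [← mul_assoc, ← hbez]
    linear_combination -hc
  rw [this]
  exact U.isUnit

/-- `SL(2, ℤ)`. -/
abbrev SL2Z := Matrix.SpecialLinearGroup (Fin 2) ℤ

/-- The entrywise reduction homomorphism `p_m : SL(2,ℤ) → SL(2, ℤ/mℤ)`. -/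
def redMap (m : ℕ) : SL2Z →* Matrix.SpecialLinearGroup (Fin 2) (ZMod m) :=
  Matrix.SpecialLinearGroup.map (Int.castRingHom (ZMod m))

/-- The Wohlfahrt level of `Γ`: the least positive integer `l` such that
`A * T ^ l * A⁻¹ ∈ Γ` for all `A ∈ SL(2,ℤ)`, where `T = [[1,1],[0,1]]`. -/
noncomputable def wohlfahrtLevel (Γ : Subgroup SL2Z) : ℕ :=
  sInf {l : ℕ | 0 < l ∧ ∀ A : SL2Z, A * ModularGroup.T ^ l * A⁻¹ ∈ Γ}

/-- The deficiency `f_{Γ,m} = [Γ(m) : Γ(m) ∩ Γ]`, where `Γ(m) = ker p_m`. -/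
noncomputable def deficiency (Γ : Subgroup SL2Z) (m : ℕ) : ℕ :=
  Γ.relIndex (redMap m).ker

lemma redMap_coe (m : ℕ) (g : SL2Z) (i j : Fin 2) :
    ((redMap m g : Matrix (Fin 2) (Fin 2) (ZMod m))) i j = ((g.1 i j : ℤ) : ZMod m) := rfl

lemma redMap_T_pow (m : ℕ) (j : ℕ) :
    redMap m (ModularGroup.T ^ j) = EE12 ((j : ZMod m)) := by
  ext a b
  rw [redMap_coe]
  have : (ModularGroup.T ^ j).1 = !![1, (j : ℤ); 0, 1] := by
    rw [← zpow_natCast, ModularGroup.coe_T_zpow]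
  rw [this]
  fin_cases a <;> fin_cases b <;> simp [EE12, Fin.mk_zero, Fin.mk_one]

lemma redMap_S_coe (m : ℕ) :
    ((redMap m ModularGroup.S : Matrix (Fin 2) (Fin 2) (ZMod m))) = !![0, -1; 1, 0] := by
  ext a b
  rw [redMap_coe]
  have : (ModularGroup.S).1 = !![0, -1; 1, 0] := ModularGroup.coe_S
  rw [this]
  fin_cases a <;> fin_cases b <;> simp [Fin.mk_zero, Fin.mk_one]

lemma EE21_eq_conj (m : ℕ) (x : ZMod m) :
    EE21 x = redMap m ModularGroup.S * EE12 (-x) * (redMap m ModularGroup.S)⁻¹ := by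
  rw [eq_mul_inv_iff_mul_eq]
  ext a b
  rw [Matrix.SpecialLinearGroup.coe_mul, Matrix.SpecialLinearGroup.coe_mul, redMap_S_coe]
  fin_cases a <;> fin_cases b <;>
    simp [EE12, EE21, Matrix.mul_fin_two, Fin.mk_zero, Fin.mk_one]

/-- image of the normal closure of `T^n` in `SL(2, ZMod k)`. -/
def NND (n k : ℕ) : Subgroup (Matrix.SpecialLinearGroup (Fin 2) (ZMod k)) :=
  (Subgroup.normalClosure ({ModularGroup.T ^ n} : Set SL2Z)).map (redMap k)

lemma conj_mem_NND {n k : ℕ} (A : SL2Z) {x : Matrix.SpecialLinearGroup (Fin 2) (ZMod k)}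
    (hx : x ∈ NND n k) : redMap k A * x * (redMap k A)⁻¹ ∈ NND n k := by
  obtain ⟨δ, hδ, rfl⟩ := hx
  refine ⟨A * δ * A⁻¹, Subgroup.normalClosure_normal.conj_mem δ hδ A, by
    simp [_root_.map_mul]⟩

lemma EE12_mem_NND {n k : ℕ} [NeZero k] {x : ZMod k}
    (hx : x ∈ Ideal.span {((n : ℕ) : ZMod k)}) : EE12 x ∈ NND n k := by
  obtain ⟨y, hy⟩ := Ideal.mem_span_singleton'.mp hx
  refine ⟨(ModularGroup.T ^ n) ^ y.val,
    Subgroup.pow_mem _ (Subgroup.subset_normalClosure (Set.mem_singleton _)) _, ?_⟩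
  rw [← pow_mul, redMap_T_pow]
  congr 1
  push_cast
  rw [ZMod.natCast_val, ZMod.cast_id]
  rw [← hy]; ring

lemma EE21_mem_NND {n k : ℕ} [NeZero k] {x : ZMod k}
    (hx : x ∈ Ideal.span {((n : ℕ) : ZMod k)}) : EE21 x ∈ NND n k := by
  rw [EE21_eq_conj]
  exact conj_mem_NND _ (EE12_mem_NND (by exact neg_mem hx))

lemma DD_mem_NND {n k : ℕ} [NeZero k] (u : (ZMod k)ˣ)
    (hu : (u : ZMod k) - 1 ∈ Ideal.span {((n : ℕ) : ZMod k)}) : DD u ∈ NND n k := by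
  have hb : (1 : ZMod k) - ((u⁻¹ : (ZMod k)ˣ) : ZMod k) ∈ Ideal.span {((n : ℕ) : ZMod k)} := by
    have : (1 : ZMod k) - ((u⁻¹ : (ZMod k)ˣ) : ZMod k)
        = ((u⁻¹ : (ZMod k)ˣ) : ZMod k) * ((u : ZMod k) - 1) := by
      have := u.inv_mul
      linear_combination -this
    rw [this]
    exact Ideal.mul_mem_left _ _ hu
  rw [DD_eq_prod]
  have hT1 : EE12 (1 : ZMod k) = redMap k ModularGroup.T := by
    rw [show ModularGroup.T = ModularGroup.T ^ (1 : ℕ) by rw [pow_one], redMap_T_pow]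
    norm_num
  -- the L matrix with -1 in bottom-left
  have hL : ∃ L : SL2Z, redMap k L = EE21 (-1 : ZMod k) := by
    refine ⟨(⟨!![1, 0; -1, 1], by simp [Matrix.det_fin_two_of]⟩ : SL2Z), ?_⟩
    ext a b
    erw [redMap_coe]
    fin_cases a <;> fin_cases b <;> simp [EE21, Fin.mk_zero, Fin.mk_one]
  obtain ⟨L, hLeq⟩ := hL
  refine Subgroup.mul_mem _ (Subgroup.mul_mem _ (EE12_mem_NND hu) ?_) ?_
  · rw [show EE12 (-1 : ZMod k) = (EE12 (1 : ZMod k))⁻¹ by rw [EE12_inv], hT1]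
    exact conj_mem_NND _ (EE21_mem_NND hb)
  · rw [show EE12 (-1 : ZMod k) = (EE12 (1 : ZMod k))⁻¹ by rw [EE12_inv], hT1]
    apply conj_mem_NND
    rw [show EE21 (1 : ZMod k) = (EE21 (-1 : ZMod k))⁻¹ by rw [EE21_inv, neg_neg], ← hLeq]
    exact conj_mem_NND _ (EE12_mem_NND hu)

lemma ker_le_sup_normalClosure {n k : ℕ} (hn : 0 < n) (hk : 0 < k) (hnk : n ∣ k) :
    (redMap n).ker ≤ (redMap k).ker ⊔
      Subgroup.normalClosure ({ModularGroup.T ^ n} : Set SL2Z) := by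
  haveI : NeZero k := ⟨hk.ne'⟩
  intro g hg
  set R := ZMod k
  set I : Ideal R := Ideal.span {((n : ℕ) : R)} with hI
  have hgmem : ∀ i j : Fin 2, ((g.1 i j : ℤ) : ZMod n) = (1 : Matrix (Fin 2) (Fin 2) (ZMod n)) i j := by
    intro i j
    have h1 : redMap n g = 1 := hg
    calc ((g.1 i j : ℤ) : ZMod n) = (redMap n g : Matrix (Fin 2) (Fin 2) (ZMod n)) i j := rfl
    _ = (1 : Matrix (Fin 2) (Fin 2) (ZMod n)) i j := by rw [h1]; rfl
  have key : ∀ x : ℤ, ((x : ℤ) : ZMod n) = 0 → ((x : ℤ) : R) ∈ I := by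
    intro x hx
    obtain ⟨e, he⟩ := (ZMod.intCast_zmod_eq_zero_iff_dvd x n).mp hx
    rw [he]
    push_cast
    have h' := Ideal.mul_mem_right (e : ZMod k) I (Ideal.subset_span (Set.mem_singleton ((n : ℕ) : R)))
    convert h' using 1
    simp [R]
  set A := redMap k g with hA
  have entry_diag : ∀ i : Fin 2, (A.1 i i) - 1 ∈ I := by
    intro i
    have h1 := hgmem i i
    rw [Matrix.one_apply_eq] at h1
    have h0 : ((g.1 i i - 1 : ℤ) : ZMod n) = 0 := by push_cast; rw [h1]; ring
    have h2 := key _ h0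
    push_cast at h2
    convert h2 using 2 <;> rfl
  have entry_off : ∀ i j : Fin 2, i ≠ j → (A.1 i j) ∈ I := by
    intro i j hij
    have h1 := hgmem i j
    rw [Matrix.one_apply_ne hij] at h1
    have h2 := key _ h1
    convert h2 using 2 <;> rfl
  have hdetA : A.1 0 0 * A.1 1 1 - A.1 0 1 * A.1 1 0 = 1 := by
    rw [← Matrix.det_fin_two]; exact A.2
  -- make the top-left entry a unit
  have hcop : IsCoprime (A.1 0 0) (((n : ℕ) : R) * A.1 1 0) := by
    apply IsCoprime.mul_right
    · obtain ⟨y, hy⟩ := Ideal.mem_span_singleton'.mp (entry_diag 0)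
      exact ⟨1, -y, by linear_combination -hy⟩
    · exact ⟨A.1 1 1, -(A.1 0 1), by linear_combination hdetA⟩
  obtain ⟨t, hunit⟩ := exists_unit_add _ _ hcop
  set B := EE12 (((n : ℕ) : R) * t) * A with hB
  have hBcoe : B.1 = !![A.1 0 0 + (n : R) * t * A.1 1 0, A.1 0 1 + (n : R) * t * A.1 1 1;
      A.1 1 0, A.1 1 1] := by
    rw [hB, Matrix.SpecialLinearGroup.coe_mul, show (EE12 (((n : ℕ) : R) * t)).1
      = !![1, (n : R) * t; 0, 1] from rfl, Matrix.eta_fin_two A.1, Matrix.mul_fin_two]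
    ext a b
    fin_cases a <;> fin_cases b <;> simp [Fin.mk_zero, Fin.mk_one] <;> ring
  set u := hunit.unit with hudef
  have hu00 : B.1 0 0 = u := by
    have h1 : B.1 0 0 = A.1 0 0 + (n : R) * t * A.1 1 0 := by rw [hBcoe]; simp
    rw [h1, hunit.unit_spec]
    ring
  have hB10 : B.1 1 0 ∈ I := by
    have h1 : B.1 1 0 = A.1 1 0 := by rw [hBcoe]; simp
    rw [h1]; exact entry_off 1 0 (by decide)
  have hB01 : B.1 0 1 ∈ I := by
    have h1 : B.1 0 1 = A.1 0 1 + (n : R) * t * A.1 1 1 := by rw [hBcoe]; simp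
    rw [h1]
    exact add_mem (entry_off 0 1 (by decide))
      (Ideal.mul_mem_right _ _ (Ideal.mul_mem_right _ _ (Ideal.subset_span (Set.mem_singleton _))))
  have huI : (u : R) - 1 ∈ I := by
    rw [hunit.unit_spec]
    have : A.1 0 0 + ((n : ℕ) : R) * A.1 1 0 * t - 1
        = (A.1 0 0 - 1) + ((n : ℕ) : R) * (A.1 1 0 * t) := by ring
    rw [this]
    exact add_mem (entry_diag 0)
      (Ideal.mul_mem_right _ _ (Ideal.subset_span (Set.mem_singleton _)))
  have hBmem : B ∈ NND n k := by
    rw [LDU B u hu00]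
    refine Subgroup.mul_mem _ (Subgroup.mul_mem _ ?_ ?_) ?_
    · exact EE21_mem_NND (Ideal.mul_mem_right _ _ hB10)
    · exact DD_mem_NND u huI
    · exact EE12_mem_NND (Ideal.mul_mem_left _ _ hB01)
  have hAmem : A ∈ NND n k := by
    have h1 : A = (EE12 (((n : ℕ) : R) * t))⁻¹ * B := by rw [hB]; group
    rw [h1, EE12_inv]
    exact Subgroup.mul_mem _
      (EE12_mem_NND (neg_mem (Ideal.mul_mem_right _ _ (Ideal.subset_span (Set.mem_singleton _)))))
      hBmem
  obtain ⟨δ, hδ, hδeq⟩ := hAmem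
  have hker : g * δ⁻¹ ∈ (redMap k).ker := by
    rw [MonoidHom.mem_ker, _root_.map_mul, _root_.map_inv, hδeq, ← hA, mul_inv_cancel]
  have hfin : g = (g * δ⁻¹) * δ := by group
  rw [hfin]
  exact Subgroup.mul_mem _ (Subgroup.mem_sup_left hker) (Subgroup.mem_sup_right hδ)

lemma ker_redMap_mono {n k : ℕ} (hnk : n ∣ k) : (redMap k).ker ≤ (redMap n).ker := by
  intro g hg
  have hgk : ∀ i j : Fin 2, ((g.1 i j : ℤ) : ZMod k)
      = (1 : Matrix (Fin 2) (Fin 2) (ZMod k)) i j := by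
    intro i j
    have h1 : redMap k g = 1 := hg
    calc ((g.1 i j : ℤ) : ZMod k) = (redMap k g : Matrix (Fin 2) (Fin 2) (ZMod k)) i j := rfl
    _ = _ := by rw [h1]; rfl
  have key : ∀ x : ℤ, ((x : ℤ) : ZMod k) = 0 → ((x : ℤ) : ZMod n) = 0 := by
    intro x hx
    exact (ZMod.intCast_zmod_eq_zero_iff_dvd x n).mpr
      (dvd_trans (Int.natCast_dvd_natCast.mpr hnk) ((ZMod.intCast_zmod_eq_zero_iff_dvd x k).mp hx))
  show redMap n g = 1
  ext i j
  rw [redMap_coe, Matrix.SpecialLinearGroup.coe_one]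
  rcases eq_or_ne i j with rfl | hij
  · rw [Matrix.one_apply_eq]
    have h1 := hgk i i
    rw [Matrix.one_apply_eq] at h1
    have h0 : ((g.1 i i - 1 : ℤ) : ZMod k) = 0 := by push_cast; rw [h1]; ring
    have h2 := key _ h0
    push_cast at h2
    linear_combination h2
  · rw [Matrix.one_apply_ne hij]
    have h1 := hgk i j
    rw [Matrix.one_apply_ne hij] at h1
    exact key _ h1

lemma T_pow_mem_ker (m : ℕ) : ModularGroup.T ^ m ∈ (redMap m).ker := by
  show redMap m (ModularGroup.T ^ m) = 1
  rw [redMap_T_pow, ZMod.natCast_self, EE12_zero]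

lemma ker_redMap_finiteIndex {m : ℕ} (hm : 0 < m) : (redMap m).ker.FiniteIndex := by
  haveI : NeZero m := ⟨hm.ne'⟩
  haveI : Finite (SL2Z ⧸ (redMap m).ker) :=
    Finite.of_equiv ((redMap m).range) (QuotientGroup.quotientKerEquivRange (redMap m)).symm.toEquiv
  exact Subgroup.finiteIndex_of_finite_quotient (H := (redMap m).ker)

lemma relindex_sup_eq {G : Type*} [Group G] (A N' : Subgroup G) [N'.Normal]
    (h0 : (A ⊓ N').relIndex A ≠ 0) :
    A.relIndex (A ⊔ N') = (A ⊓ N').relIndex N' := by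
  have h1 : (A ⊓ N').relIndex A * A.relIndex (A ⊔ N') = (A ⊓ N').relIndex (A ⊔ N') :=
    Subgroup.relIndex_mul_relIndex _ _ _ inf_le_left le_sup_left
  have h2 : (A ⊓ N').relIndex N' * N'.relIndex (A ⊔ N') = (A ⊓ N').relIndex (A ⊔ N') :=
    Subgroup.relIndex_mul_relIndex _ _ _ inf_le_right le_sup_right
  have h3 : N'.relIndex (A ⊔ N') = N'.relIndex A := Subgroup.relIndex_sup_right A N'
  have h4 : N'.relIndex A = (A ⊓ N').relIndex A := by
    rw [inf_comm, Subgroup.inf_relIndex_right]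
  rw [h3, h4] at h2
  apply Nat.eq_of_mul_eq_mul_left (Nat.pos_of_ne_zero h0)
  rw [h1, ← h2]
  ring

theorem deficiency_wohlfahrt_minimal (Γ : Subgroup SL2Z) (hΓ : Γ.FiniteIndex)
    (l : ℕ) (hl : l = wohlfahrtLevel Γ) (m : ℕ) (hm : 0 < m) :
    deficiency Γ l ∣ deficiency Γ m ∧ deficiency Γ l ≤ deficiency Γ m := by
  haveI := hΓ
  -- the defining set of the Wohlfahrt level is nonempty
  have hSne : {l : ℕ | 0 < l ∧ ∀ A : SL2Z, A * ModularGroup.T ^ l * A⁻¹ ∈ Γ}.Nonempty := by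
    refine ⟨Γ.normalCore.index, Nat.pos_of_ne_zero Subgroup.FiniteIndex.index_ne_zero, fun A => ?_⟩
    have h1 : A * ModularGroup.T ^ Γ.normalCore.index * A⁻¹
        = (A * ModularGroup.T * A⁻¹) ^ Γ.normalCore.index := by
      rw [conj_pow]
    rw [h1]
    exact Γ.normalCore_le (Subgroup.pow_index_mem _ _)
  have hmem := Nat.sInf_mem hSne
  rw [← wohlfahrtLevel, ← hl] at hmem
  obtain ⟨hl0, hlev⟩ := hmem
  -- notation
  set k := l * m with hkdef
  have hk0 : 0 < k := Nat.mul_pos hl0 hm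
  set Gl := (redMap l).ker with hGl
  set Gm := (redMap m).ker with hGm
  set Gk := (redMap k).ker with hGk
  have hkl : Gk ≤ Gl := ker_redMap_mono ⟨m, rfl⟩
  have hkm : Gk ≤ Gm := ker_redMap_mono ⟨l, mul_comm l m⟩
  haveI hGlF : Gl.FiniteIndex := ker_redMap_finiteIndex hl0
  haveI hGmF : Gm.FiniteIndex := ker_redMap_finiteIndex hm
  haveI hGkF : Gk.FiniteIndex := ker_redMap_finiteIndex hk0
  -- the normal closure of T^l is contained in Γ and in Gl
  set Δ := Subgroup.normalClosure ({ModularGroup.T ^ l} : Set SL2Z) with hΔ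
  have hΔΓ : Δ ≤ Γ := by
    rw [hΔ, Subgroup.normalClosure]
    rw [Subgroup.closure_le]
    intro x hx
    rw [Group.mem_conjugatesOfSet_iff] at hx
    obtain ⟨a, ha, hconj⟩ := hx
    rw [Set.mem_singleton_iff] at ha
    subst ha
    obtain ⟨c, hc⟩ := isConj_iff.mp hconj
    rw [← hc]
    exact hlev c
  have hΔGl : Δ ≤ Gl := by
    apply Subgroup.normalClosure_le_normal
    intro x hx
    rw [Set.mem_singleton_iff] at hx
    subst hx
    exact T_pow_mem_ker l
  -- main structural fact : Gl = (Γ ⊓ Gl) ⊔ Gk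
  have hmain : (Γ ⊓ Gl) ⊔ Gk = Gl := by
    apply le_antisymm (sup_le inf_le_right hkl)
    intro x hx
    have h1 := ker_le_sup_normalClosure hl0 hk0 ⟨m, rfl⟩ hx
    have h2 : Gk ⊔ Δ ≤ (Γ ⊓ Gl) ⊔ Gk := by
      apply sup_le le_sup_right
      exact le_trans (le_inf hΔΓ hΔGl) le_sup_left
    exact h2 h1
  -- nonzero relIndex facts
  have hne : ∀ X Y : Subgroup SL2Z, X.FiniteIndex → X ≤ Y → X.relIndex Y ≠ 0 := by
    intro X Y hX hXY h0
    exact hX.index_ne_zero ((Nat.eq_zero_of_zero_dvd ∘ (h0 ▸ ·)) (Subgroup.relIndex_dvd_index_of_le hXY))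
  -- deficiency l = deficiency k
  have hlk : deficiency Γ l = Γ.relIndex Gk := by
    show Γ.relIndex Gl = Γ.relIndex Gk
    haveI : (Γ ⊓ Gl).FiniteIndex := inferInstance
    haveI : (Γ ⊓ Gl ⊓ Gk).FiniteIndex := inferInstance
    calc Γ.relIndex Gl = (Γ ⊓ Gl).relIndex Gl := (Subgroup.inf_relIndex_right Γ Gl).symm
    _ = (Γ ⊓ Gl).relIndex ((Γ ⊓ Gl) ⊔ Gk) := by rw [hmain]
    _ = ((Γ ⊓ Gl) ⊓ Gk).relIndex Gk := relindex_sup_eq _ _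
        (hne _ _ inferInstance inf_le_left)
    _ = (Γ ⊓ Gk).relIndex Gk := by rw [inf_assoc, inf_eq_right.mpr hkl]
    _ = Γ.relIndex Gk := Subgroup.inf_relIndex_right Γ Gk
  -- deficiency k divides deficiency m
  have hkm2 : Γ.relIndex Gk ∣ deficiency Γ m := by
    show Γ.relIndex Gk ∣ Γ.relIndex Gm
    haveI : (Γ ⊓ Gm).FiniteIndex := inferInstance
    haveI : (Γ ⊓ Gm ⊓ Gk).FiniteIndex := inferInstance
    have hc : Γ.relIndex Gk = (Γ ⊓ Gm).relIndex ((Γ ⊓ Gm) ⊔ Gk) := by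
      calc Γ.relIndex Gk = (Γ ⊓ Gk).relIndex Gk := (Subgroup.inf_relIndex_right Γ Gk).symm
      _ = ((Γ ⊓ Gm) ⊓ Gk).relIndex Gk := by rw [inf_assoc, inf_eq_right.mpr hkm]
      _ = (Γ ⊓ Gm).relIndex ((Γ ⊓ Gm) ⊔ Gk) := (relindex_sup_eq _ _
          (hne _ _ inferInstance inf_le_left)).symm
    have hmul : (Γ ⊓ Gm).relIndex ((Γ ⊓ Gm) ⊔ Gk) * ((Γ ⊓ Gm) ⊔ Gk).relIndex Gm
        = (Γ ⊓ Gm).relIndex Gm :=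
      Subgroup.relIndex_mul_relIndex _ _ _ le_sup_left (sup_le inf_le_right hkm)
    rw [Subgroup.inf_relIndex_right] at hmul
    exact ⟨_, by rw [← hmul, hc]⟩
  have hdvd : deficiency Γ l ∣ deficiency Γ m := hlk ▸ hkm2
  refine ⟨hdvd, Nat.le_of_dvd ?_ hdvd⟩
  have : deficiency Γ m ≠ 0 := by
    show Γ.relIndex Gm ≠ 0
    rw [← Subgroup.inf_relIndex_right]
    haveI : (Γ ⊓ Gm).FiniteIndex := inferInstance
    exact hne _ _ inferInstance inf_le_right
  omega
end

section
/- Let Γ be a finite-index subgroup of SL(2,ℤ) with Wohlfahrt level l. If p_l(Γ) = SL(2,ℤ/lℤ) (i.e., the level index e_{Γ,l} = 1, so Γ is a totally non-congruence group), then p_n(Γ) = SL(2,ℤ/nℤ) for every positive integer n. -/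
namespace Wohlfahrt
open Matrix ModularGroup Subgroup
open Matrix.SpecialLinearGroup

def red' {m M : ℕ} (h : m ∣ M) :
    Matrix.SpecialLinearGroup (Fin 2) (ZMod M) →* Matrix.SpecialLinearGroup (Fin 2) (ZMod m) :=
  Matrix.SpecialLinearGroup.map (ZMod.castHom h (ZMod m))

lemma redMap_apply (M : ℕ) (g : SL2Z) (i j : Fin 2) :
    (redMap M g : Matrix (Fin 2) (Fin 2) (ZMod M)) i j
      = ((g : Matrix (Fin 2) (Fin 2) ℤ) i j : ZMod M) := rfl

lemma red'_apply {m M : ℕ} (h : m ∣ M) (z : Matrix.SpecialLinearGroup (Fin 2) (ZMod M)) (i j : Fin 2) :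
    (red' h z : Matrix (Fin 2) (Fin 2) (ZMod m)) i j
      = ZMod.castHom h (ZMod m) ((z : Matrix (Fin 2) (Fin 2) (ZMod M)) i j) := rfl

lemma red'_redMap {m M : ℕ} (h : m ∣ M) (g : SL2Z) :
    red' h (redMap M g) = redMap m g := by
  apply Matrix.SpecialLinearGroup.ext
  intro i j
  rw [red'_apply, redMap_apply, redMap_apply, map_intCast]

lemma redMap_eq_iff (M : ℕ) (x y : SL2Z) :
    redMap M x = redMap M y ↔
      ∀ i j, (M : ℤ) ∣ ((x : Matrix (Fin 2) (Fin 2) ℤ) i j - (y : Matrix (Fin 2) (Fin 2) ℤ) i j) := by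
  constructor
  · intro hxy i j
    have h2 : ((redMap M x : Matrix (Fin 2) (Fin 2) (ZMod M)) i j)
        = ((redMap M y : Matrix (Fin 2) (Fin 2) (ZMod M)) i j) := by rw [hxy]
    rw [redMap_apply, redMap_apply] at h2
    exact dvd_sub_comm.mp (Int.ModEq.dvd ((ZMod.intCast_eq_intCast_iff _ _ _).mp h2))
  · intro hd
    apply Matrix.SpecialLinearGroup.ext
    intro i j
    rw [redMap_apply, redMap_apply, ZMod.intCast_eq_intCast_iff]
    exact Int.modEq_iff_dvd.mpr (dvd_sub_comm.mp (hd i j))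

lemma mem_ker_iff (M : ℕ) (x : SL2Z) :
    x ∈ (redMap M).ker ↔
      ∀ i j, (M : ℤ) ∣ ((x : Matrix (Fin 2) (Fin 2) ℤ) i j - (1 : Matrix (Fin 2) (Fin 2) ℤ) i j) := by
  rw [MonoidHom.mem_ker, show (1 : Matrix.SpecialLinearGroup (Fin 2) (ZMod M)) = redMap M 1 from (_root_.map_one _).symm,
    redMap_eq_iff]
  simp [Matrix.SpecialLinearGroup.coe_one]

def A2 : SL2Z := ⟨!![0,-1;1,0], by simp [Matrix.det_fin_two_of]⟩
def A3 : SL2Z := ⟨!![1,0;1,1], by simp [Matrix.det_fin_two_of]⟩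

lemma coe_A2 : (A2 : Matrix (Fin 2) (Fin 2) ℤ) = !![0,-1;1,0] := rfl
lemma coe_A3 : (A3 : Matrix (Fin 2) (Fin 2) ℤ) = !![1,0;1,1] := rfl

lemma coe_A2_inv : (A2⁻¹ : SL2Z).1 = !![0,1;-1,0] := by
  rw [SL2_inv_expl]
  simp [A2]
  norm_num [Matrix.ext_iff.symm]
  rfl

lemma coe_A3_inv : (A3⁻¹ : SL2Z).1 = !![1,0;-1,1] := by
  rw [SL2_inv_expl]
  simp [A3]
  norm_num [Matrix.ext_iff.symm]
  rfl

lemma conj_zpow (A t : SL2Z) (k : ℤ) : A * t ^ k * A⁻¹ = (A * t * A⁻¹) ^ k := by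
  have : (MulAut.conj A) (t ^ k) = ((MulAut.conj A) t) ^ k := map_zpow _ _ _
  simpa [MulAut.conj_apply] using this

lemma A2_T_A2 : A2 * ModularGroup.T ^ (-1 : ℤ) * A2⁻¹ = A3 := by
  apply Matrix.SpecialLinearGroup.ext
  intro i j
  rw [Matrix.SpecialLinearGroup.coe_mul, Matrix.SpecialLinearGroup.coe_mul, ModularGroup.coe_T_zpow, coe_A2, coe_A2_inv, coe_A3]
  fin_cases i <;> fin_cases j <;>
    simp [Matrix.mul_apply, Fin.sum_univ_two]

/-- The subgroup generated by all conjugates of powers of `T^L`. -/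
def Dgrp (L : ℕ) : Subgroup SL2Z :=
  Subgroup.closure {x | ∃ (A : SL2Z) (k : ℤ), x = A * ModularGroup.T ^ ((L : ℤ) * k) * A⁻¹}

lemma redMap_T_zpow (M : ℕ) (k : ℤ) :
    redMap M (ModularGroup.T ^ k)
      = ⟨!![1, (k : ZMod M); 0, 1], by simp [Matrix.det_fin_two_of]⟩ := by
  apply Matrix.SpecialLinearGroup.ext
  intro i j
  rw [redMap_apply, ModularGroup.coe_T_zpow]
  fin_cases i <;> fin_cases j <;> simp

lemma Dgrp_mono {l L : ℕ} (h : l ∣ L) : Dgrp L ≤ Dgrp l := by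
  apply Subgroup.closure_le _ |>.mpr
  rintro x ⟨A, k, rfl⟩
  obtain ⟨c, rfl⟩ := h
  apply Subgroup.subset_closure
  exact ⟨A, c * k, by push_cast; ring_nf⟩

lemma Dgrp_le_ker {L M : ℕ} (h : M ∣ L) : Dgrp L ≤ (redMap M).ker := by
  apply Subgroup.closure_le _ |>.mpr
  rintro x ⟨A, k, rfl⟩
  have hT : redMap M (ModularGroup.T ^ ((L : ℤ) * k)) = 1 := by
    rw [redMap_T_zpow]
    apply Matrix.SpecialLinearGroup.ext
    intro i j
    obtain ⟨c, rfl⟩ := h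
    have : (((M * c : ℕ) : ℤ) * k : ZMod M) = 0 := by push_cast; simp
    fin_cases i <;> fin_cases j <;>
      simp_all [Matrix.SpecialLinearGroup.coe_one]
  have : A * ModularGroup.T ^ ((L : ℤ) * k) * A⁻¹ ∈ (redMap M).ker := by
    rw [MonoidHom.mem_ker]
    simp [_root_.map_mul, hT]
  exact this

lemma Dgrp_le {l : ℕ} (Γ : Subgroup SL2Z) (hT : ∀ A : SL2Z, A * ModularGroup.T ^ l * A⁻¹ ∈ Γ) :
    Dgrp l ≤ Γ := by
  apply Subgroup.closure_le _ |>.mpr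
  rintro x ⟨A, k, rfl⟩
  have : ModularGroup.T ^ ((l : ℤ) * k) = (ModularGroup.T ^ l) ^ k := by
    rw [← zpow_natCast ModularGroup.T l, ← _root_.zpow_mul]
  rw [this, conj_zpow]
  exact Subgroup.zpow_mem _ (hT A) k

lemma coe_A3_zpow (k : ℤ) : ((A3 ^ k : SL2Z) : Matrix (Fin 2) (Fin 2) ℤ) = !![1,0;k,1] := by
  have h1 : A3 ^ k = A2 * ModularGroup.T ^ (-k) * A2⁻¹ := by
    rw [← A2_T_A2, ← conj_zpow, ← _root_.zpow_mul]
    norm_num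
  rw [h1, Matrix.SpecialLinearGroup.coe_mul, Matrix.SpecialLinearGroup.coe_mul,
    ModularGroup.coe_T_zpow, coe_A2, coe_A2_inv]
  ext i j
  fin_cases i <;> fin_cases j <;> simp [Matrix.mul_apply, Fin.sum_univ_two]

section zmod
variable {M : ℕ}

def Tz (x : ZMod M) : Matrix.SpecialLinearGroup (Fin 2) (ZMod M) :=
  ⟨!![1, x; 0, 1], by simp [Matrix.det_fin_two_of]⟩
def Uz (x : ZMod M) : Matrix.SpecialLinearGroup (Fin 2) (ZMod M) :=
  ⟨!![1, 0; x, 1], by simp [Matrix.det_fin_two_of]⟩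

lemma Tz_eq (k : ℤ) : Tz ((k : ZMod M)) = redMap M (ModularGroup.T ^ k) := by
  rw [redMap_T_zpow]; rfl

lemma Uz_eq (k : ℤ) : Uz ((k : ZMod M)) = redMap M (A3 ^ k) := by
  apply Matrix.SpecialLinearGroup.ext
  intro i j
  rw [redMap_apply, coe_A3_zpow]
  fin_cases i <;> fin_cases j <;> simp [Uz]

lemma Tz_mem (x : ZMod M) : Tz x ∈ Subgroup.closure {redMap M ModularGroup.T, redMap M A3} := by
  obtain ⟨k, rfl⟩ := ZMod.intCast_surjective x
  rw [Tz_eq, map_zpow]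
  exact Subgroup.zpow_mem _ (Subgroup.subset_closure (by simp)) k

lemma Uz_mem (x : ZMod M) : Uz x ∈ Subgroup.closure {redMap M ModularGroup.T, redMap M A3} := by
  obtain ⟨k, rfl⟩ := ZMod.intCast_surjective x
  rw [Uz_eq, map_zpow]
  exact Subgroup.zpow_mem _ (Subgroup.subset_closure (by simp)) k

end zmod

lemma gen_p (p : ℕ) [Fact p.Prime] :
    Subgroup.closure {redMap p ModularGroup.T, redMap p A3} = ⊤ := by
  set H := Subgroup.closure {redMap p ModularGroup.T, redMap p A3} with hH
  rw [eq_top_iff']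
  have claim : ∀ w : Matrix.SpecialLinearGroup (Fin 2) (ZMod p),
      (w : Matrix (Fin 2) (Fin 2) (ZMod p)) 1 0 ≠ 0 → w ∈ H := by
    intro w hc
    set a := (w : Matrix (Fin 2) (Fin 2) (ZMod p)) 0 0 with ha
    set c := (w : Matrix (Fin 2) (Fin 2) (ZMod p)) 1 0 with hcdef
    set t := (1 - a) * c⁻¹ with ht
    set w2 := Uz (-c) * (Tz t * w) with hw2
    have e00 : (w2 : Matrix (Fin 2) (Fin 2) (ZMod p)) 0 0 = 1 := by
      rw [hw2, Matrix.SpecialLinearGroup.coe_mul, Matrix.SpecialLinearGroup.coe_mul]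
      simp [Uz, Tz, Matrix.mul_apply, Matrix.vecMul, Matrix.vecHead, Matrix.vecTail, dotProduct, Fin.sum_univ_two, ← ha, ← hcdef, ht]
      field_simp
      ring
    have e10 : (w2 : Matrix (Fin 2) (Fin 2) (ZMod p)) 1 0 = 0 := by
      rw [hw2, Matrix.SpecialLinearGroup.coe_mul, Matrix.SpecialLinearGroup.coe_mul]
      simp [Uz, Tz, Matrix.mul_apply, Matrix.vecMul, Matrix.vecHead, Matrix.vecTail, dotProduct, Fin.sum_univ_two, ← ha, ← hcdef, ht]
      field_simp
      ring
    have e11 : (w2 : Matrix (Fin 2) (Fin 2) (ZMod p)) 1 1 = 1 := by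
      have hdet := w2.2
      rw [Matrix.det_fin_two, e00, e10] at hdet
      simpa using hdet
    have hw2T : w2 = Tz ((w2 : Matrix (Fin 2) (Fin 2) (ZMod p)) 0 1) := by
      apply Matrix.SpecialLinearGroup.ext
      intro i j
      fin_cases i <;> fin_cases j <;> simp [Tz, e00, e10, e11]
    have hw2H : w2 ∈ H := hw2T ▸ Tz_mem _
    have : w = (Tz t)⁻¹ * ((Uz (-c))⁻¹ * w2) := by
      rw [hw2]; group
    rw [this]
    exact H.mul_mem (H.inv_mem (Tz_mem _)) (H.mul_mem (H.inv_mem (Uz_mem _)) hw2H)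
  intro w
  by_cases hc : (w : Matrix (Fin 2) (Fin 2) (ZMod p)) 1 0 ≠ 0
  · exact claim w hc
  · push_neg at hc
    have ha : (w : Matrix (Fin 2) (Fin 2) (ZMod p)) 0 0 ≠ 0 := by
      intro ha0
      have hdet := w.2
      rw [Matrix.det_fin_two, ha0, hc] at hdet
      simp at hdet
    have h10 : (((Uz 1 : Matrix.SpecialLinearGroup (Fin 2) (ZMod p)) * w : Matrix.SpecialLinearGroup (Fin 2) (ZMod p)) : Matrix (Fin 2) (Fin 2) (ZMod p)) 1 0
        = (w : Matrix (Fin 2) (Fin 2) (ZMod p)) 0 0 := by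
      rw [Matrix.SpecialLinearGroup.coe_mul]
      simp [Uz, Matrix.mul_apply, Matrix.vecMul, Matrix.vecHead, Matrix.vecTail, dotProduct, Fin.sum_univ_two, hc]
    have : w = (Uz (1 : ZMod p))⁻¹ * (Uz 1 * w) := by group
    rw [this]
    exact H.mul_mem (H.inv_mem (Uz_mem _)) (claim _ (by rw [h10]; exact ha))
lemma zmod_lift {L N : ℕ} [NeZero N] (h : L ∣ N) (x : ZMod N) (r : ℤ)
    (hx : ZMod.castHom h (ZMod L) x = ((r : ℤ) : ZMod L)) :
    ∃ a : ℤ, x = ((r + (L : ℤ) * a : ℤ) : ZMod N) := by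
  have hv : (((x.val : ℤ)) : ZMod N) = x := by
    rw [Int.cast_natCast, ZMod.natCast_val, ZMod.cast_id]
  rw [← hv, map_intCast] at hx
  have hdvd : (L : ℤ) ∣ ((x.val : ℤ) - r) :=
    dvd_sub_comm.mp (Int.ModEq.dvd ((ZMod.intCast_eq_intCast_iff _ _ _).mp hx))
  obtain ⟨a, ha⟩ := hdvd
  exact ⟨a, by rw [← hv]; congr 1; linarith⟩

lemma caseA (p L : ℕ) (hp : 0 < p) (hL : 0 < L) (hpL : p ∣ L)
    (z : Matrix.SpecialLinearGroup (Fin 2) (ZMod (p*L)))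
    (hz : red' (dvd_mul_left L p) z = 1) :
    ∃ g ∈ Dgrp L, redMap (p*L) g = z := by
  haveI : NeZero (p*L) := ⟨by positivity⟩
  have hent : ∀ i j, ZMod.castHom (dvd_mul_left L p) (ZMod L) ((z : Matrix (Fin 2) (Fin 2) (ZMod (p*L))) i j)
      = (((1 : Matrix (Fin 2) (Fin 2) ℤ) i j : ℤ) : ZMod L) := by
    intro i j
    have h2 : (red' (dvd_mul_left L p) z : Matrix (Fin 2) (Fin 2) (ZMod L)) i j
        = ((1 : Matrix.SpecialLinearGroup (Fin 2) (ZMod L)) : Matrix (Fin 2) (Fin 2) (ZMod L)) i j := by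
      rw [hz]
    rw [red'_apply] at h2
    rw [h2]
    fin_cases i <;> fin_cases j <;> simp
  obtain ⟨a₀, h00⟩ := zmod_lift (dvd_mul_left L p) ((z : Matrix (Fin 2) (Fin 2) (ZMod (p*L))) 0 0) 1 (by simpa using hent 0 0)
  obtain ⟨a₁, h01⟩ := zmod_lift (dvd_mul_left L p) ((z : Matrix (Fin 2) (Fin 2) (ZMod (p*L))) 0 1) 0 (by simpa using hent 0 1)
  obtain ⟨a₂, h10⟩ := zmod_lift (dvd_mul_left L p) ((z : Matrix (Fin 2) (Fin 2) (ZMod (p*L))) 1 0) 0 (by simpa using hent 1 0)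
  obtain ⟨a₃, h11⟩ := zmod_lift (dvd_mul_left L p) ((z : Matrix (Fin 2) (Fin 2) (ZMod (p*L))) 1 1) 1 (by simpa using hent 1 1)
  set Lz : ℤ := (L : ℤ) with hLz
  -- determinant relation
  have hdet : ((p*L : ℕ) : ℤ) ∣ ((1 + Lz*a₀) * (1 + Lz*a₃) - (Lz*a₁)*(Lz*a₂) - 1) := by
    have hd := z.2
    rw [Matrix.det_fin_two, h00, h01, h10, h11] at hd
    have : (((1 + Lz*a₀) * (1 + Lz*a₃) - (Lz*a₁)*(Lz*a₂) : ℤ) : ZMod (p*L)) = ((1 : ℤ) : ZMod (p*L)) := by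
      push_cast
      push_cast at hd
      linear_combination hd
    exact dvd_sub_comm.mp (Int.ModEq.dvd ((ZMod.intCast_eq_intCast_iff _ _ _).mp this))
  obtain ⟨c, hc⟩ := hpL
  have hpc : (L : ℤ) = (p : ℤ) * (c : ℤ) := by rw [hc]; push_cast; ring
  have hLne : (L : ℤ) ≠ 0 := by exact_mod_cast hL.ne'
  obtain ⟨w, hw⟩ := hdet
  have hw2 : (L:ℤ) * (a₀ + a₃ + (L:ℤ) * (a₀*a₃ - a₁*a₂)) = (L:ℤ) * ((p : ℤ) * w) := by
    push_cast at hw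
    linear_combination hw
  have ha03 : a₀ + a₃ = (p : ℤ) * w - (L:ℤ) * (a₀*a₃ - a₁*a₂) := by
    have h5 := mul_left_cancel₀ hLne hw2
    linarith
  set k₁ : ℤ := a₁ - a₃ with hk₁
  set k₂ : ℤ := -(a₂ + a₃) with hk₂
  set k₃ : ℤ := a₃ with hk₃
  set g : SL2Z := ModularGroup.T ^ ((L:ℤ) * k₁) * (A2 * ModularGroup.T ^ ((L:ℤ) * k₂) * A2⁻¹)
      * (A3 * ModularGroup.T ^ ((L:ℤ) * k₃) * A3⁻¹) with hg
  have hgm : (g : Matrix (Fin 2) (Fin 2) ℤ)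
      = !![1, (L:ℤ)*k₁; 0, 1] * (!![0,-1;1,0] * !![1, (L:ℤ)*k₂; 0, 1] * !![0,1;-1,0])
        * (!![1,0;1,1] * !![1, (L:ℤ)*k₃; 0, 1] * !![1,0;-1,1]) := by
    rw [hg]
    simp only [Matrix.SpecialLinearGroup.coe_mul, ModularGroup.coe_T_zpow,
      coe_A2, coe_A2_inv, coe_A3, coe_A3_inv]
  have hmod : ((p*L : ℕ) : ℤ) = (p:ℤ) * (L:ℤ) := by push_cast; ring
  have E00 : (((g : Matrix (Fin 2) (Fin 2) ℤ) 0 0 : ℤ) : ZMod (p*L))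
      = (z : Matrix (Fin 2) (Fin 2) (ZMod (p*L))) 0 0 := by
    rw [h00]
    apply (ZMod.intCast_eq_intCast_iff _ _ _).mpr
    apply Int.modEq_iff_dvd.mpr
    have e00 : (g : Matrix (Fin 2) (Fin 2) ℤ) 0 0
        = 1 - (L:ℤ)*k₃ - (L:ℤ)^2*k₁*k₂ + (L:ℤ)^3*k₁*k₂*k₃ - (L:ℤ)^2*k₁*k₃ := by
      rw [hgm]
      simp [Matrix.mul_apply, Fin.sum_univ_two]
      ring
    rw [e00, hmod]
    refine ⟨w + c*(k₁*k₂ + k₁*k₃ - (L:ℤ)*k₁*k₂*k₃ - (a₀*a₃ - a₁*a₂)), ?_⟩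
    linear_combination (L:ℤ) * ha03 + ((L:ℤ)*(k₁*k₂ + k₁*k₃ - (L:ℤ)*k₁*k₂*k₃ - (a₀*a₃ - a₁*a₂))) * hpc
  have E01 : (((g : Matrix (Fin 2) (Fin 2) ℤ) 0 1 : ℤ) : ZMod (p*L))
      = (z : Matrix (Fin 2) (Fin 2) (ZMod (p*L))) 0 1 := by
    rw [h01]
    apply (ZMod.intCast_eq_intCast_iff _ _ _).mpr
    apply Int.modEq_iff_dvd.mpr
    have e01 : (g : Matrix (Fin 2) (Fin 2) ℤ) 0 1
        = (L:ℤ)*k₃ + (L:ℤ)*k₁ + (L:ℤ)^2*k₁*k₃ - (L:ℤ)^3*k₁*k₂*k₃ := by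
      rw [hgm]
      simp [Matrix.mul_apply, Fin.sum_univ_two]
      ring
    rw [e01, hmod]
    refine ⟨-c*(k₁*k₃ - (L:ℤ)*k₁*k₂*k₃), ?_⟩
    linear_combination (-(L:ℤ)*(k₁*k₃ - (L:ℤ)*k₁*k₂*k₃)) * hpc + (L:ℤ) * hk₁
  have E10 : (((g : Matrix (Fin 2) (Fin 2) ℤ) 1 0 : ℤ) : ZMod (p*L))
      = (z : Matrix (Fin 2) (Fin 2) (ZMod (p*L))) 1 0 := by
    rw [h10]
    apply (ZMod.intCast_eq_intCast_iff _ _ _).mpr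
    apply Int.modEq_iff_dvd.mpr
    have e10 : (g : Matrix (Fin 2) (Fin 2) ℤ) 1 0
        = -(L:ℤ)*k₂ + (L:ℤ)^2*k₂*k₃ - (L:ℤ)*k₃ := by
      rw [hgm]
      simp [Matrix.mul_apply, Fin.sum_univ_two]
      ring
    rw [e10, hmod]
    refine ⟨-c*(k₂*k₃), ?_⟩
    linear_combination (-(L:ℤ)*(k₂*k₃)) * hpc + (L:ℤ) * hk₂
  have E11 : (((g : Matrix (Fin 2) (Fin 2) ℤ) 1 1 : ℤ) : ZMod (p*L))
      = (z : Matrix (Fin 2) (Fin 2) (ZMod (p*L))) 1 1 := by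
    rw [h11]
    apply (ZMod.intCast_eq_intCast_iff _ _ _).mpr
    apply Int.modEq_iff_dvd.mpr
    have e11 : (g : Matrix (Fin 2) (Fin 2) ℤ) 1 1
        = 1 + (L:ℤ)*k₃ - (L:ℤ)^2*k₂*k₃ := by
      rw [hgm]
      simp [Matrix.mul_apply, Fin.sum_univ_two]
      ring
    rw [e11, hmod]
    refine ⟨c*(k₂*k₃), ?_⟩
    linear_combination ((L:ℤ)*(k₂*k₃)) * hpc
  refine ⟨g, ?_, ?_⟩
  · apply Subgroup.mul_mem
    apply Subgroup.mul_mem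
    · exact Subgroup.subset_closure ⟨1, k₁, by simp⟩
    · exact Subgroup.subset_closure ⟨A2, k₂, rfl⟩
    · exact Subgroup.subset_closure ⟨A3, k₃, rfl⟩
  · apply Matrix.SpecialLinearGroup.ext
    intro i j
    rw [redMap_apply]
    fin_cases i <;> fin_cases j
    · exact E00
    · exact E01
    · exact E10
    · exact E11
lemma redMap_T_zpow_congr {M : ℕ} {j k : ℤ} (h : (j : ZMod M) = (k : ZMod M)) :
    redMap M (ModularGroup.T ^ j) = redMap M (ModularGroup.T ^ k) := by
  rw [redMap_T_zpow, redMap_T_zpow]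
  exact Subtype.ext (by rw [h])

lemma caseB (p L : ℕ) (hp : p.Prime) (hco : Nat.Coprime p L) (hL : 0 < L) :
    Subgroup.map (redMap p) (Dgrp L ⊓ (redMap L).ker) = ⊤ := by
  haveI : Fact p.Prime := ⟨hp⟩
  rw [eq_top_iff, ← gen_p p]
  rw [Subgroup.closure_le]
  have hcop : IsCoprime (L : ℤ) (p : ℤ) := by
    rw [Int.isCoprime_iff_gcd_eq_one]
    simpa [Int.gcd] using hco.symm
  obtain ⟨u, v, huv⟩ := hcop
  have hTL : ∀ k : ℤ, ModularGroup.T ^ ((L:ℤ) * k) ∈ Dgrp L ⊓ (redMap L).ker := by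
    intro k
    have hmem : ModularGroup.T ^ ((L:ℤ) * k) ∈ Dgrp L :=
      Subgroup.subset_closure ⟨1, k, by simp⟩
    exact ⟨hmem, Dgrp_le_ker (dvd_refl L) hmem⟩
  rintro x (rfl | rfl)
  · refine ⟨ModularGroup.T ^ ((L:ℤ) * u), hTL u, ?_⟩
    have : redMap p (ModularGroup.T ^ ((L:ℤ) * u)) = redMap p (ModularGroup.T ^ (1:ℤ)) := by
      apply redMap_T_zpow_congr
      have : ((L:ℤ) * u - 1 : ℤ) = -v * p := by linarith
      have h2 : (((L:ℤ) * u - 1 : ℤ) : ZMod p) = 0 := by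
        rw [this]; push_cast; simp
      obtain ⟨t, ht⟩ := (ZMod.intCast_zmod_eq_zero_iff_dvd _ _).mp h2
      have : ((L:ℤ) * u : ℤ) = 1 + p * t := by linarith
      rw [this]; push_cast; simp
    rw [this, zpow_one]
  · refine ⟨A2 * ModularGroup.T ^ ((L:ℤ) * (-u)) * A2⁻¹, ?_, ?_⟩
    · have hmem : A2 * ModularGroup.T ^ ((L:ℤ) * (-u)) * A2⁻¹ ∈ Dgrp L :=
        Subgroup.subset_closure ⟨A2, -u, rfl⟩
      exact ⟨hmem, Dgrp_le_ker (dvd_refl L) hmem⟩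
    · have h1 : redMap p (ModularGroup.T ^ ((L:ℤ) * (-u))) = redMap p (ModularGroup.T ^ (-1:ℤ)) := by
        apply redMap_T_zpow_congr
        have : ((L:ℤ) * (-u) - (-1) : ℤ) = v * p := by linarith
        have h2 : (((L:ℤ) * (-u) - (-1) : ℤ) : ZMod p) = 0 := by
          rw [this]; push_cast; simp
        have h3 := (ZMod.intCast_zmod_eq_zero_iff_dvd _ _).mp h2
        obtain ⟨t, ht⟩ := h3
        have : ((L:ℤ) * (-u) : ℤ) = -1 + p * t := by linarith
        rw [this]; push_cast; simp
      rw [_root_.map_mul, _root_.map_mul, h1, ← _root_.map_mul, ← _root_.map_mul, A2_T_A2]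

lemma main' (l : ℕ) (hl : 0 < l) : ∀ n, 0 < n → ∀ x ∈ (redMap l).ker,
    ∃ d ∈ Dgrp l, redMap n x = redMap n d := by
  intro n
  induction n using Nat.strong_induction_on with
  | _ n IH =>
  intro hn x hx
  rw [MonoidHom.mem_ker] at hx
  by_cases hnl : n ∣ l
  · refine ⟨1, Subgroup.one_mem _, ?_⟩
    rw [_root_.map_one, ← red'_redMap hnl x, hx, _root_.map_one]
  · have hn1 : n ≠ 1 := by rintro rfl; exact hnl (one_dvd l)
    obtain ⟨p, hp, hpn⟩ := Nat.exists_prime_and_dvd hn1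
    obtain ⟨m, hm⟩ := hpn
    have hm0 : 0 < m := Nat.pos_of_ne_zero (fun h0 => by rw [h0, Nat.mul_zero] at hm; omega)
    have hmn : m < n := by
      rw [hm]
      exact (Nat.lt_mul_iff_one_lt_left hm0).mpr hp.one_lt
    obtain ⟨d₀, hd₀D, hd₀⟩ := IH m hmn hm0 x (by rwa [MonoidHom.mem_ker])
    have hyl : redMap l (d₀⁻¹ * x) = 1 := by
      have h1 : redMap l d₀ = 1 := Dgrp_le_ker (dvd_refl l) hd₀D
      rw [_root_.map_mul, _root_.map_inv, h1, hx]
      simp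
    have hym : redMap m (d₀⁻¹ * x) = 1 := by
      rw [_root_.map_mul, _root_.map_inv, hd₀]
      simp
    set L := Nat.lcm l m with hLdef
    have hlL : l ∣ L := Nat.dvd_lcm_left l m
    have hmL : m ∣ L := Nat.dvd_lcm_right l m
    have hL0 : 0 < L := Nat.pos_of_ne_zero (by simp [hLdef, Nat.lcm_ne_zero, hl.ne', hm0.ne'])
    have hyL : redMap L (d₀⁻¹ * x) = 1 := by
      rw [show (1 : Matrix.SpecialLinearGroup (Fin 2) (ZMod L)) = redMap L 1 from (_root_.map_one _).symm]
      rw [redMap_eq_iff]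
      intro i j
      have h1 : (l:ℤ) ∣ _ := (redMap_eq_iff l (d₀⁻¹*x) 1).mp (by rw [hyl, _root_.map_one]) i j
      have h2 : (m:ℤ) ∣ _ := (redMap_eq_iff m (d₀⁻¹*x) 1).mp (by rw [hym, _root_.map_one]) i j
      have := Int.coe_lcm_dvd h1 h2
      simpa [Int.lcm, Int.natAbs_natCast] using this
    by_cases hpL : p ∣ L
    · have hz : red' (dvd_mul_left L p) (redMap (p*L) (d₀⁻¹ * x)) = 1 := by
        rw [red'_redMap, hyL]
      obtain ⟨g, hgD, hgz⟩ := caseA p L hp.pos hL0 hpL _ hz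
      refine ⟨d₀ * g, Subgroup.mul_mem _ hd₀D (Dgrp_mono hlL hgD), ?_⟩
      have hnpL : n ∣ (p*L) := by rw [hm]; exact Nat.mul_dvd_mul_left p hmL
      have hyg : redMap n (d₀⁻¹ * x) = redMap n g := by
        rw [← red'_redMap hnpL, ← red'_redMap hnpL g, hgz]
      calc redMap n x = redMap n (d₀ * (d₀⁻¹ * x)) := by rw [mul_inv_cancel_left]
        _ = redMap n d₀ * redMap n (d₀⁻¹ * x) := by rw [_root_.map_mul]
        _ = redMap n d₀ * redMap n g := by rw [hyg]
        _ = redMap n (d₀ * g) := by rw [_root_.map_mul]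
    · have hcop : Nat.Coprime p L := hp.coprime_iff_not_dvd.mpr hpL
      have hJ := caseB p L hp hcop hL0
      have : redMap p (d₀⁻¹ * x) ∈ Subgroup.map (redMap p) (Dgrp L ⊓ (redMap L).ker) := by
        rw [hJ]; trivial
      obtain ⟨d₁, hd₁mem, hd₁⟩ := Subgroup.mem_map.mp this
      refine ⟨d₀ * d₁, Subgroup.mul_mem _ hd₀D (Dgrp_mono hlL (Subgroup.mem_inf.mp hd₁mem).1), ?_⟩
      have hpm : ¬ p ∣ m := fun hd => hpL (hd.trans hmL)
      have hcopm : IsCoprime (p:ℤ) (m:ℤ) :=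
        Nat.isCoprime_iff_coprime.mpr (hp.coprime_iff_not_dvd.mpr hpm)
      have hym1 : redMap m d₁ = 1 := by
        have := (Subgroup.mem_inf.mp hd₁mem).2
        rw [MonoidHom.mem_ker] at this
        rw [← red'_redMap hmL d₁, this, _root_.map_one]
      have hyd : redMap n (d₀⁻¹ * x) = redMap n d₁ := by
        rw [redMap_eq_iff]
        intro i j
        have h1 : (p:ℤ) ∣ _ := (redMap_eq_iff p (d₀⁻¹*x) d₁).mp hd₁.symm i j
        have h2 : (m:ℤ) ∣ _ := (redMap_eq_iff m (d₀⁻¹*x) d₁).mp (by rw [hym, hym1]) i j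
        have h3 := hcopm.mul_dvd h1 h2
        rw [hm]
        push_cast
        exact h3
      calc redMap n x = redMap n (d₀ * (d₀⁻¹ * x)) := by rw [mul_inv_cancel_left]
        _ = redMap n d₀ * redMap n (d₀⁻¹ * x) := by rw [_root_.map_mul]
        _ = redMap n d₀ * redMap n d₁ := by rw [hyd]
        _ = redMap n (d₀ * d₁) := by rw [_root_.map_mul]
lemma int_val_cast {N : ℕ} [NeZero N] (x : ZMod N) : (((x.val : ℤ)) : ZMod N) = x := by
  rw [Int.cast_natCast, ZMod.natCast_val, ZMod.cast_id]

lemma crt_eq (p m : ℕ) (hp0 : 0 < p) (hm0 : 0 < m) (hco : Nat.Coprime p m)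
    (x y : Matrix.SpecialLinearGroup (Fin 2) (ZMod (p*m)))
    (h1 : red' (dvd_mul_right p m) x = red' (dvd_mul_right p m) y)
    (h2 : red' (dvd_mul_left m p) x = red' (dvd_mul_left m p) y) : x = y := by
  haveI : NeZero (p*m) := ⟨by positivity⟩
  apply Matrix.SpecialLinearGroup.ext
  intro i j
  set u := (x : Matrix (Fin 2) (Fin 2) (ZMod (p*m))) i j with hu
  set v := (y : Matrix (Fin 2) (Fin 2) (ZMod (p*m))) i j with hv
  have e1 : ((u.val : ℤ) : ZMod p) = ((v.val : ℤ) : ZMod p) := by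
    have := congrArg (fun w : Matrix.SpecialLinearGroup (Fin 2) (ZMod p) =>
      (w : Matrix (Fin 2) (Fin 2) (ZMod p)) i j) h1
    simp only [red'_apply] at this
    rw [← hu, ← hv, ← int_val_cast u, ← int_val_cast v] at this
    rwa [map_intCast, map_intCast] at this
  have e2 : ((u.val : ℤ) : ZMod m) = ((v.val : ℤ) : ZMod m) := by
    have := congrArg (fun w : Matrix.SpecialLinearGroup (Fin 2) (ZMod m) =>
      (w : Matrix (Fin 2) (Fin 2) (ZMod m)) i j) h2
    simp only [red'_apply] at this
    rw [← hu, ← hv, ← int_val_cast u, ← int_val_cast v] at this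
    rwa [map_intCast, map_intCast] at this
  have d1 : (p:ℤ) ∣ ((u.val : ℤ) - v.val) :=
    dvd_sub_comm.mp (Int.ModEq.dvd ((ZMod.intCast_eq_intCast_iff _ _ _).mp e1))
  have d2 : (m:ℤ) ∣ ((u.val : ℤ) - v.val) :=
    dvd_sub_comm.mp (Int.ModEq.dvd ((ZMod.intCast_eq_intCast_iff _ _ _).mp e2))
  have dc : ((p*m : ℕ) : ℤ) ∣ ((u.val : ℤ) - v.val) := by
    push_cast
    exact (Nat.isCoprime_iff_coprime.mpr hco).mul_dvd d1 d2
  have : ((u.val : ℤ) : ZMod (p*m)) = ((v.val : ℤ) : ZMod (p*m)) := by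
    rw [ZMod.intCast_eq_intCast_iff]
    exact Int.modEq_iff_dvd.mpr (dvd_sub_comm.mp dc)
  rwa [int_val_cast, int_val_cast] at this

lemma redMap_surjective : ∀ n, 0 < n → Function.Surjective (redMap n) := by
  intro n
  induction n using Nat.strong_induction_on with
  | _ n IH =>
  intro hn z
  by_cases hn1 : n = 1
  · subst hn1
    haveI : Subsingleton (Matrix.SpecialLinearGroup (Fin 2) (ZMod 1)) :=
      ⟨fun a b => Subtype.ext (funext fun i => funext fun j => Subsingleton.elim _ _)⟩
    exact ⟨1, Subsingleton.elim _ _⟩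
  · obtain ⟨p, hp, hpn⟩ := Nat.exists_prime_and_dvd hn1
    obtain ⟨m, hm⟩ := hpn
    have hm0 : 0 < m := Nat.pos_of_ne_zero (fun h0 => by rw [h0, Nat.mul_zero] at hm; omega)
    have hmn : m < n := by
      rw [hm]
      exact (Nat.lt_mul_iff_one_lt_left hm0).mpr hp.one_lt
    subst hm
    obtain ⟨g₀, hg₀⟩ := IH m hmn hm0 (red' (dvd_mul_left m p) z)
    set w := z * (redMap (p*m) g₀)⁻¹ with hw
    have hwk : red' (dvd_mul_left m p) w = 1 := by
      rw [hw, _root_.map_mul, _root_.map_inv, red'_redMap, hg₀]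
      simp
    by_cases hpm : p ∣ m
    · obtain ⟨g, _, hgz⟩ := caseA p m hp.pos hm0 hpm w hwk
      refine ⟨g * g₀, ?_⟩
      rw [_root_.map_mul, hgz, hw]
      simp
    · have hcop : Nat.Coprime p m := hp.coprime_iff_not_dvd.mpr hpm
      have hJ := caseB p m hp hcop hm0
      have hmem : red' (dvd_mul_right p m) w ∈ Subgroup.map (redMap p) (Dgrp m ⊓ (redMap m).ker) := by
        rw [hJ]; trivial
      obtain ⟨g₁, hg₁mem, hg₁⟩ := Subgroup.mem_map.mp hmem
      have hg₁w : redMap (p*m) g₁ = w := by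
        apply crt_eq p m hp.pos hm0 hcop
        · rw [red'_redMap, hg₁]
        · rw [red'_redMap, hwk]
          have := (Subgroup.mem_inf.mp hg₁mem).2
          rwa [MonoidHom.mem_ker] at this
      refine ⟨g₁ * g₀, ?_⟩
      rw [_root_.map_mul, hg₁w, hw]
      simp
end Wohlfahrt

theorem totally_noncongruence_surjects (Γ : Subgroup SL2Z) (hΓ : Γ.FiniteIndex)
    (l : ℕ) (hl : l = wohlfahrtLevel Γ)
    (h : Γ.map (redMap l) = ⊤) :
    ∀ n : ℕ, 0 < n → Γ.map (redMap n) = ⊤ := by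
  classical
  haveI := hΓ
  haveI hfc : Γ.normalCore.FiniteIndex := inferInstance
  -- the defining set of the Wohlfahrt level is nonempty
  have hne : {k : ℕ | 0 < k ∧ ∀ A : SL2Z, A * ModularGroup.T ^ k * A⁻¹ ∈ Γ}.Nonempty := by
    refine ⟨Γ.normalCore.index, ?_, ?_⟩
    · exact Nat.pos_of_ne_zero hfc.index_ne_zero
    · intro A
      have h1 : (A * ModularGroup.T * A⁻¹) ^ Γ.normalCore.index ∈ Γ.normalCore :=
        Subgroup.pow_index_mem _ _
      have h2 : A * ModularGroup.T ^ Γ.normalCore.index * A⁻¹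
          = (A * ModularGroup.T * A⁻¹) ^ Γ.normalCore.index := by
        have := map_pow (MulAut.conj A) ModularGroup.T Γ.normalCore.index
        simpa [MulAut.conj_apply] using this.symm
      rw [h2]
      exact Γ.normalCore_le h1
  have hmem := Nat.sInf_mem hne
  rw [← wohlfahrtLevel, ← hl] at hmem
  obtain ⟨hlpos, hTl⟩ := hmem
  have hDΓ : Wohlfahrt.Dgrp l ≤ Γ := Wohlfahrt.Dgrp_le Γ hTl
  intro n hn
  rw [eq_top_iff]
  intro z _
  obtain ⟨g, hg⟩ := Wohlfahrt.redMap_surjective n hn z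
  have hgmem : redMap l g ∈ Γ.map (redMap l) := by rw [h]; trivial
  obtain ⟨γ, hγΓ, hγ⟩ := Subgroup.mem_map.mp hgmem
  have hx : γ⁻¹ * g ∈ (redMap l).ker := by
    rw [MonoidHom.mem_ker, _root_.map_mul, _root_.map_inv, hγ]
    simp
  obtain ⟨d, hdD, hxd⟩ := Wohlfahrt.main' l hlpos n hn _ hx
  refine Subgroup.mem_map.mpr ⟨γ * d, Γ.mul_mem hγΓ (hDΓ hdD), ?_⟩
  rw [_root_.map_mul, ← hxd, ← _root_.map_mul, mul_inv_cancel_left, hg]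
end

section
/- (Wohlfahrt) Let Γ be a congruence subgroup of SL(2,ℤ), i.e., Γ(n) ⊆ Γ for some positive integer n, and let l be the Wohlfahrt level of Γ. Then Γ(l) ⊆ Γ, and l is the minimal positive integer n with Γ(n) ⊆ Γ; that is, the Wohlfahrt level equals the minimal congruence level of Γ. -/
open Matrix ModularGroup

/-! ### Generic helper lemmas -/

lemma redMap_eq_iff (m : ℕ) (A B : SL2Z) :
    redMap m A = redMap m B ↔
      ∀ i j, (((A : Matrix (Fin 2) (Fin 2) ℤ) i j : ZMod m)) =
        (((B : Matrix (Fin 2) (Fin 2) ℤ) i j : ZMod m)) := by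
  refine Subtype.ext_iff.trans ?_
  simp only [redMap, Matrix.SpecialLinearGroup.map_apply_coe, RingHom.mapMatrix_apply]
  rw [← Matrix.ext_iff]
  simp [Matrix.map_apply]

lemma redMap_entry (m : ℕ) (g : SL2Z) (i j : Fin 2) :
    ((redMap m g : Matrix.SpecialLinearGroup (Fin 2) (ZMod m)) :
      Matrix (Fin 2) (Fin 2) (ZMod m)) i j = ((g : Matrix (Fin 2) (Fin 2) ℤ) i j : ZMod m) := by
  simp [redMap, Matrix.SpecialLinearGroup.map_apply_coe, Matrix.map_apply]

lemma mem_ker_redMap_iff (m : ℕ) (M : SL2Z) :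
    M ∈ (redMap m).ker ↔ ∀ i j,
      (m:ℤ) ∣ ((M : Matrix (Fin 2) (Fin 2) ℤ) i j - (1 : Matrix (Fin 2) (Fin 2) ℤ) i j) := by
  rw [MonoidHom.mem_ker, show (1 : Matrix.SpecialLinearGroup (Fin 2) (ZMod m)) = redMap m 1 by
    simp, redMap_eq_iff]
  refine forall₂_congr fun i j => ?_
  rw [ZMod.intCast_eq_intCast_iff, Int.modEq_iff_dvd, dvd_sub_comm,
    Matrix.SpecialLinearGroup.coe_one]

lemma exists_isCoprime_add_mul (a r : ℤ) (N : ℕ) (hN : N ≠ 0) (h : IsCoprime a r) :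
    ∃ k : ℤ, IsCoprime (a + r * k) (N : ℤ) := by
  classical
  let ps : Finset ℕ := N.primeFactors.filter (fun p => ¬ p ∣ a.natAbs)
  let k : ℕ := ∏ p ∈ ps, p
  refine ⟨(k : ℤ), ?_⟩
  rw [Int.isCoprime_iff_gcd_eq_one]
  by_contra hg
  obtain ⟨p, pp, hpdvd⟩ := Nat.exists_prime_and_dvd hg
  have hpg : (p:ℤ) ∣ (Int.gcd (a + r * k) N : ℤ) := Int.natCast_dvd_natCast.mpr hpdvd
  have hpx : (p:ℤ) ∣ a + r * k := hpg.trans (Int.gcd_dvd_left _ _)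
  have hpN : (p:ℤ) ∣ (N:ℤ) := hpg.trans (Int.gcd_dvd_right _ _)
  have hpNn : p ∣ N := Int.natCast_dvd_natCast.mp hpN
  by_cases hpa : (p:ℤ) ∣ a
  · have hprk : (p:ℤ) ∣ r * (k:ℤ) := by
      have := hpx.sub hpa
      simpa using this
    have ppz : Prime (p:ℤ) := Nat.prime_iff_prime_int.mp pp
    rcases ppz.dvd_mul.mp hprk with hpr | hpk
    · obtain ⟨x, y, hxy⟩ := h
      exact ppz.not_dvd_one (hxy ▸ ((hpa.mul_left x).add (hpr.mul_left y)))
    · have hpkn : p ∣ k := Int.natCast_dvd_natCast.mp hpk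
      obtain ⟨q, hq, hpq⟩ := (pp.prime.dvd_finset_prod_iff _).mp hpkn
      have hq' := Finset.mem_filter.mp hq
      have : p = q := (Nat.prime_dvd_prime_iff_eq pp (Nat.prime_of_mem_primeFactors hq'.1)).mp hpq
      exact hq'.2 (this ▸ (Int.natCast_dvd.mp hpa))
  · have hpk : p ∣ k := Finset.dvd_prod_of_mem _
      (Finset.mem_filter.mpr ⟨Nat.mem_primeFactors.mpr ⟨pp, hpNn, hN⟩,
        fun hd => hpa (Int.natCast_dvd.mpr hd)⟩)
    have hpkz : (p:ℤ) ∣ (k:ℤ) := Int.natCast_dvd_natCast.mpr hpk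
    have : (p:ℤ) ∣ a := by
      have := hpx.sub (hpkz.mul_left r)
      simpa using this
    exact hpa this

lemma SL2_ext_of_unit {R : Type*} [CommRing R] (X Y : Matrix.SpecialLinearGroup (Fin 2) R)
    (h00 : (X : Matrix (Fin 2) (Fin 2) R) 0 0 = (Y : Matrix (Fin 2) (Fin 2) R) 0 0)
    (h01 : (X : Matrix (Fin 2) (Fin 2) R) 0 1 = (Y : Matrix (Fin 2) (Fin 2) R) 0 1)
    (h10 : (X : Matrix (Fin 2) (Fin 2) R) 1 0 = (Y : Matrix (Fin 2) (Fin 2) R) 1 0)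
    (hu : IsUnit ((X : Matrix (Fin 2) (Fin 2) R) 0 0)) : X = Y := by
  have dX : (X : Matrix (Fin 2) (Fin 2) R) 0 0 * (X : Matrix (Fin 2) (Fin 2) R) 1 1 -
      (X : Matrix (Fin 2) (Fin 2) R) 0 1 * (X : Matrix (Fin 2) (Fin 2) R) 1 0 = 1 := by
    rw [← Matrix.det_fin_two]; exact X.2
  have dY : (Y : Matrix (Fin 2) (Fin 2) R) 0 0 * (Y : Matrix (Fin 2) (Fin 2) R) 1 1 -
      (Y : Matrix (Fin 2) (Fin 2) R) 0 1 * (Y : Matrix (Fin 2) (Fin 2) R) 1 0 = 1 := by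
    rw [← Matrix.det_fin_two]; exact Y.2
  have h11 : (X : Matrix (Fin 2) (Fin 2) R) 1 1 = (Y : Matrix (Fin 2) (Fin 2) R) 1 1 := by
    apply hu.mul_left_cancel
    linear_combination dX - dY - ((Y : Matrix (Fin 2) (Fin 2) R) 1 1) * h00 +
      ((X : Matrix (Fin 2) (Fin 2) R) 0 1) * h10 + ((Y : Matrix (Fin 2) (Fin 2) R) 1 0) * h01
  exact Subtype.ext (by
    rw [Matrix.eta_fin_two (X : Matrix (Fin 2) (Fin 2) R),
      Matrix.eta_fin_two (Y : Matrix (Fin 2) (Fin 2) R), h00, h01, h10, h11])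

/-! ### Explicit elements -/

def Em (x : ℤ) : SL2Z := ⟨!![1, x; 0, 1], by simp [Matrix.det_fin_two_of]⟩
def Fm (x : ℤ) : SL2Z := ⟨!![1, 0; x, 1], by simp [Matrix.det_fin_two_of]⟩
def Wm (x : ℤ) : SL2Z := ⟨!![1 + x, x; -x, 1 - x], by rw [Matrix.det_fin_two_of]; ring⟩

lemma conj_zpow_mem (Γ : Subgroup SL2Z) (l : ℕ)
    (hT : ∀ A : SL2Z, A * ModularGroup.T ^ l * A⁻¹ ∈ Γ) (A : SL2Z) (k : ℤ) :
    A * ModularGroup.T ^ ((l : ℤ) * k) * A⁻¹ ∈ Γ := by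
  have h1 : A * ModularGroup.T ^ ((l:ℤ) * k) * A⁻¹ = (A * ModularGroup.T ^ l * A⁻¹) ^ k := by
    rw [_root_.zpow_mul, zpow_natCast]
    simp only [← MulAut.conj_apply, ← map_zpow]
  rw [h1]; exact Γ.zpow_mem (hT A) k

lemma Em_eq (x : ℤ) : Em x = ModularGroup.T ^ x :=
  Subtype.ext (by rw [ModularGroup.coe_T_zpow]; rfl)

lemma Em_mem (Γ : Subgroup SL2Z) (l : ℕ)
    (hT : ∀ A : SL2Z, A * ModularGroup.T ^ l * A⁻¹ ∈ Γ) (k : ℤ) : Em ((l:ℤ) * k) ∈ Γ := by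
  have h := conj_zpow_mem Γ l hT 1 k
  rw [one_mul, inv_one, mul_one] at h
  rwa [Em_eq]

lemma Fm_mem (Γ : Subgroup SL2Z) (l : ℕ)
    (hT : ∀ A : SL2Z, A * ModularGroup.T ^ l * A⁻¹ ∈ Γ) (k : ℤ) : Fm ((l:ℤ) * k) ∈ Γ := by
  have h := conj_zpow_mem Γ l hT S (-k)
  have he : Fm ((l:ℤ) * k) = S * ModularGroup.T ^ ((l:ℤ) * (-k)) * S⁻¹ := by
    rw [eq_mul_inv_iff_mul_eq]
    apply Subtype.ext
    simp only [Matrix.SpecialLinearGroup.coe_mul, ModularGroup.coe_T_zpow, ModularGroup.coe_S]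
    show (!![1,0;(l:ℤ)*k,1] : Matrix (Fin 2) (Fin 2) ℤ) * !![0,-1;1,0] = _
    rw [Matrix.mul_fin_two, Matrix.mul_fin_two]
    congrm !![?_, ?_; ?_, ?_] <;> ring
  rwa [he]

lemma Wm_mem (Γ : Subgroup SL2Z) (l : ℕ)
    (hT : ∀ A : SL2Z, A * ModularGroup.T ^ l * A⁻¹ ∈ Γ) (k : ℤ) : Wm ((l:ℤ) * k) ∈ Γ := by
  have h := conj_zpow_mem Γ l hT (Fm (-1)) k
  have he : Wm ((l:ℤ) * k) = Fm (-1) * ModularGroup.T ^ ((l:ℤ) * k) * (Fm (-1))⁻¹ := by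
    rw [eq_mul_inv_iff_mul_eq]
    apply Subtype.ext
    simp only [Matrix.SpecialLinearGroup.coe_mul, ModularGroup.coe_T_zpow]
    show (!![1+(l:ℤ)*k, (l:ℤ)*k; -((l:ℤ)*k), 1-(l:ℤ)*k] : Matrix (Fin 2) (Fin 2) ℤ) * !![1,0;-1,1]
      = !![1,0;-1,1] * !![1,(l:ℤ)*k;0,1]
    rw [Matrix.mul_fin_two, Matrix.mul_fin_two]
    congrm !![?_, ?_; ?_, ?_] <;> ring
  rwa [he]

/-! ### The main theorem -/

theorem wohlfahrt_level_eq_congruence_level (Γ : Subgroup SL2Z) (hΓ : Γ.FiniteIndex)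
    (hcong : ∃ n : ℕ, 0 < n ∧ (redMap n).ker ≤ Γ)
    (l : ℕ) (hl : l = wohlfahrtLevel Γ) :
    IsLeast {n : ℕ | 0 < n ∧ (redMap n).ker ≤ Γ} l := by
  obtain ⟨n, hn, hnΓ⟩ := hcong
  -- congruence levels belong to the defining set of the Wohlfahrt level
  have hsub : ∀ m : ℕ, 0 < m → (redMap m).ker ≤ Γ →
      m ∈ {l : ℕ | 0 < l ∧ ∀ A : SL2Z, A * ModularGroup.T ^ l * A⁻¹ ∈ Γ} := by
    intro m hm hker
    refine ⟨hm, fun A => ?_⟩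
    have hTm : ModularGroup.T ^ m ∈ (redMap m).ker := by
      rw [mem_ker_redMap_iff]
      intro i j
      rw [← zpow_natCast, ModularGroup.coe_T_zpow]
      fin_cases i <;> fin_cases j <;>
        simp [Matrix.one_apply]
    have : A * ModularGroup.T ^ m * A⁻¹ ∈ (redMap m).ker :=
      Subgroup.Normal.conj_mem (MonoidHom.normal_ker _) _ hTm A
    exact hker this
  have hSne : {l : ℕ | 0 < l ∧ ∀ A : SL2Z, A * ModularGroup.T ^ l * A⁻¹ ∈ Γ}.Nonempty :=
    ⟨n, hsub n hn hnΓ⟩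
  have hlS : l ∈ {l : ℕ | 0 < l ∧ ∀ A : SL2Z, A * ModularGroup.T ^ l * A⁻¹ ∈ Γ} := by
    rw [hl, wohlfahrtLevel]; exact Nat.sInf_mem hSne
  obtain ⟨hl0, hT⟩ := hlS
  constructor
  swap
  · -- lower bound
    rintro m ⟨hm, hker⟩
    rw [hl, wohlfahrtLevel]
    exact Nat.sInf_le (hsub m hm hker)
  refine ⟨hl0, ?_⟩
  -- the main inclusion Γ(l) ≤ Γ
  set N : ℕ := l * n with hNdef
  have hN0 : N ≠ 0 := Nat.mul_ne_zero hl0.ne' hn.ne'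
  have hkerN : (redMap N).ker ≤ Γ := by
    refine le_trans ?_ hnΓ
    intro g hg
    rw [mem_ker_redMap_iff] at hg ⊢
    intro i j
    exact dvd_trans ⟨(l:ℤ), by push_cast [hNdef]; ring⟩ (hg i j)
  intro M hM
  rw [mem_ker_redMap_iff] at hM
  have h00 := hM 0 0; have h01 := hM 0 1; have h10 := hM 1 0
  simp only [Matrix.one_apply_eq, Matrix.one_apply_ne (by decide : (0:Fin 2) ≠ 1),
    Matrix.one_apply_ne (by decide : (1:Fin 2) ≠ 0), sub_zero] at h00 h01 h10
  obtain ⟨a₀, ha₀⟩ := h00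
  obtain ⟨b₀, hb₀⟩ := h01
  obtain ⟨c₀, hc₀⟩ := h10
  have ha : (M : Matrix (Fin 2) (Fin 2) ℤ) 0 0 = 1 + (l:ℤ) * a₀ := by linarith
  have hb : (M : Matrix (Fin 2) (Fin 2) ℤ) 0 1 = (l:ℤ) * b₀ := hb₀
  have hc : (M : Matrix (Fin 2) (Fin 2) ℤ) 1 0 = (l:ℤ) * c₀ := hc₀
  have hdet : (M : Matrix (Fin 2) (Fin 2) ℤ) 0 0 * (M : Matrix (Fin 2) (Fin 2) ℤ) 1 1 -
      (M : Matrix (Fin 2) (Fin 2) ℤ) 0 1 * (M : Matrix (Fin 2) (Fin 2) ℤ) 1 0 = 1 := by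
    rw [← Matrix.det_fin_two]; exact M.2
  -- find k₁ making the top-left entry coprime to N
  have hcop : IsCoprime ((M : Matrix (Fin 2) (Fin 2) ℤ) 0 0)
      ((l:ℤ) * (M : Matrix (Fin 2) (Fin 2) ℤ) 1 0) := by
    refine IsCoprime.mul_right ⟨1, -a₀, by rw [ha]; ring⟩
      ⟨(M : Matrix (Fin 2) (Fin 2) ℤ) 1 1, -(M : Matrix (Fin 2) (Fin 2) ℤ) 0 1, by
        linear_combination hdet⟩
  obtain ⟨k₁, u, w, huw⟩ := exists_isCoprime_add_mul _ _ N hN0 hcop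
  rw [ha, hc] at huw
  set d : ℤ := (M : Matrix (Fin 2) (Fin 2) ℤ) 1 1 with hd
  -- the explicit group elements
  set X : SL2Z := Fm ((l:ℤ) * ((a₀ + k₁ * ((l:ℤ) * c₀)) * u)) *
    Wm ((l:ℤ) * (a₀ + k₁ * ((l:ℤ) * c₀))) *
    Em ((l:ℤ) * (-((a₀ + k₁ * ((l:ℤ) * c₀)) * u))) with hXdef
  set P : SL2Z := Fm ((l:ℤ) * (-(c₀ * u))) * Em ((l:ℤ) * k₁) with hPdef
  set Q : SL2Z := Em ((l:ℤ) * (-((b₀ + k₁ * d) * u))) with hQdef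
  have hXmem : X ∈ Γ :=
    mul_mem (mul_mem (Fm_mem Γ l hT _) (Wm_mem Γ l hT _)) (Em_mem Γ l hT _)
  have hPmem : P ∈ Γ := mul_mem (Fm_mem Γ l hT _) (Em_mem Γ l hT _)
  have hQmem : Q ∈ Γ := Em_mem Γ l hT _
  -- the matrix identities
  have hXmat : (X : Matrix (Fin 2) (Fin 2) ℤ) =
      !![1 + (l:ℤ) * (a₀ + k₁ * ((l:ℤ) * c₀)),
         (1 + (l:ℤ) * (a₀ + k₁ * ((l:ℤ) * c₀))) * (-((l:ℤ) * ((a₀ + k₁ * ((l:ℤ) * c₀)) * u))) +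
           (l:ℤ) * (a₀ + k₁ * ((l:ℤ) * c₀));
         ((l:ℤ) * ((a₀ + k₁ * ((l:ℤ) * c₀)) * u)) * (1 + (l:ℤ) * (a₀ + k₁ * ((l:ℤ) * c₀))) -
           (l:ℤ) * (a₀ + k₁ * ((l:ℤ) * c₀)),
         (((l:ℤ) * ((a₀ + k₁ * ((l:ℤ) * c₀)) * u)) * (1 + (l:ℤ) * (a₀ + k₁ * ((l:ℤ) * c₀))) -
           (l:ℤ) * (a₀ + k₁ * ((l:ℤ) * c₀))) * (-((l:ℤ) * ((a₀ + k₁ * ((l:ℤ) * c₀)) * u))) +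
           ((l:ℤ) * ((a₀ + k₁ * ((l:ℤ) * c₀)) * u)) * ((l:ℤ) * (a₀ + k₁ * ((l:ℤ) * c₀))) +
           1 - (l:ℤ) * (a₀ + k₁ * ((l:ℤ) * c₀))] := by
    rw [hXdef]
    simp only [Matrix.SpecialLinearGroup.coe_mul]
    show (!![1,0;(l:ℤ) * ((a₀ + k₁ * ((l:ℤ) * c₀)) * u),1] : Matrix (Fin 2) (Fin 2) ℤ) *
        !![1 + (l:ℤ) * (a₀ + k₁ * ((l:ℤ) * c₀)), (l:ℤ) * (a₀ + k₁ * ((l:ℤ) * c₀));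
           -((l:ℤ) * (a₀ + k₁ * ((l:ℤ) * c₀))), 1 - (l:ℤ) * (a₀ + k₁ * ((l:ℤ) * c₀))] *
        !![1, (l:ℤ) * (-((a₀ + k₁ * ((l:ℤ) * c₀)) * u)); 0, 1] = _
    rw [Matrix.mul_fin_two, Matrix.mul_fin_two]
    congrm !![?_, ?_; ?_, ?_] <;> ring
  have hMmat : ((P * M * Q : SL2Z) : Matrix (Fin 2) (Fin 2) ℤ) =
      !![(1 + (l:ℤ) * a₀) + (l:ℤ) * k₁ * ((l:ℤ) * c₀),
         ((1 + (l:ℤ) * a₀) + (l:ℤ) * k₁ * ((l:ℤ) * c₀)) * ((l:ℤ) * (-((b₀ + k₁ * d) * u))) +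
           ((l:ℤ) * b₀ + (l:ℤ) * k₁ * d);
         ((l:ℤ) * (-(c₀ * u))) * (1 + (l:ℤ) * a₀) +
           (((l:ℤ) * (-(c₀ * u))) * ((l:ℤ) * k₁) + 1) * ((l:ℤ) * c₀),
         (((l:ℤ) * (-(c₀ * u))) * (1 + (l:ℤ) * a₀) +
           (((l:ℤ) * (-(c₀ * u))) * ((l:ℤ) * k₁) + 1) * ((l:ℤ) * c₀)) *
             ((l:ℤ) * (-((b₀ + k₁ * d) * u))) +
           (((l:ℤ) * (-(c₀ * u))) * ((l:ℤ) * b₀) +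
             (((l:ℤ) * (-(c₀ * u))) * ((l:ℤ) * k₁) + 1) * d)] := by
    rw [hPdef, hQdef]
    simp only [Matrix.SpecialLinearGroup.coe_mul]
    rw [Matrix.eta_fin_two (M : Matrix (Fin 2) (Fin 2) ℤ), ha, hb, hc, ← hd]
    show (!![1,0;(l:ℤ) * (-(c₀ * u)),1] : Matrix (Fin 2) (Fin 2) ℤ) *
        !![1, (l:ℤ) * k₁; 0, 1] * !![1 + (l:ℤ) * a₀, (l:ℤ) * b₀; (l:ℤ) * c₀, d] *
        !![1, (l:ℤ) * (-((b₀ + k₁ * d) * u)); 0, 1] = _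
    rw [Matrix.mul_fin_two, Matrix.mul_fin_two, Matrix.mul_fin_two]
    congrm !![?_, ?_; ?_, ?_] <;> ring
  -- congruence mod N
  have hLn0 : ((l:ZMod N) * (n:ZMod N)) = 0 := by
    rw [← Nat.cast_mul, ← hNdef]
    exact ZMod.natCast_self N
  have huR := congrArg (fun z : ℤ => (z : ZMod N)) huw
  push_cast [hNdef] at huR
  have hkey : X⁻¹ * (P * M * Q) ∈ (redMap N).ker := by
    rw [MonoidHom.mem_ker, _root_.map_mul, map_inv, inv_mul_eq_one]
    refine SL2_ext_of_unit _ _ ?_ ?_ ?_ ?_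
    · rw [redMap_entry, redMap_entry, hXmat, hMmat]
      simp only [Matrix.of_apply, Matrix.cons_val', Matrix.cons_val_zero, Matrix.empty_val',
        Matrix.cons_val_fin_one, Matrix.cons_val_one, Matrix.head_cons, Matrix.head_fin_const]
      push_cast
      ring
    · rw [redMap_entry, redMap_entry, hXmat, hMmat]
      simp only [Matrix.of_apply, Matrix.cons_val', Matrix.cons_val_zero, Matrix.empty_val',
        Matrix.cons_val_fin_one, Matrix.cons_val_one, Matrix.head_cons, Matrix.head_fin_const]
      push_cast
      linear_combination (-((l:ZMod N) * ((a₀:ZMod N) + (k₁:ZMod N) * ((l:ZMod N) * (c₀:ZMod N)))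
          - (l:ZMod N) * ((b₀:ZMod N) + (k₁:ZMod N) * (d:ZMod N)))) * huR +
        (((l:ZMod N) * ((a₀:ZMod N) + (k₁:ZMod N) * ((l:ZMod N) * (c₀:ZMod N)))
          - (l:ZMod N) * ((b₀:ZMod N) + (k₁:ZMod N) * (d:ZMod N))) * (w:ZMod N)) * hLn0
    · rw [redMap_entry, redMap_entry, hXmat, hMmat]
      simp only [Matrix.of_apply, Matrix.cons_val', Matrix.cons_val_zero, Matrix.empty_val',
        Matrix.cons_val_fin_one, Matrix.cons_val_one, Matrix.head_cons, Matrix.head_fin_const]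
      push_cast
      linear_combination (((l:ZMod N) * ((a₀:ZMod N) + (k₁:ZMod N) * ((l:ZMod N) * (c₀:ZMod N)))
          + (l:ZMod N) * (c₀:ZMod N))) * huR +
        (-(((l:ZMod N) * ((a₀:ZMod N) + (k₁:ZMod N) * ((l:ZMod N) * (c₀:ZMod N)))
          + (l:ZMod N) * (c₀:ZMod N)) * (w:ZMod N))) * hLn0
    · rw [redMap_entry, hXmat]
      simp only [Matrix.of_apply, Matrix.cons_val', Matrix.cons_val_zero, Matrix.empty_val',
        Matrix.cons_val_fin_one, Matrix.cons_val_one, Matrix.head_cons, Matrix.head_fin_const]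
      refine IsUnit.of_mul_eq_one ((u : ZMod N)) ?_
      push_cast
      linear_combination huR + (-(w:ZMod N)) * hLn0
  -- put everything together
  have hgrp : M = P⁻¹ * (X * ((X⁻¹ * (P * M * Q)) * Q⁻¹)) := by group
  rw [hgrp]
  exact mul_mem (inv_mem hPmem)
    (mul_mem hXmem (mul_mem (hkerN hkey) (inv_mem hQmem)))
end

section
/- Let g ≥ 3 and n ≥ 3g-2 be integers and let σ_a and σ_b be the permutations of {1,…,n} defined by: σ_a(x) = x+3 if x ≡ 1 (mod 3) and x ≤ 3g-5; σ_a(x) = x if x ≢ 1 (mod 3) and x ≤ 3g-3; σ_a(x) = x+1 if 3g-2 ≤ x ≤ n-1; σ_a(n) = 1; and σ_b(x) = x+1 if x ≢ 0 (mod 3) and x ≤ 3g-3; σ_b(x) = x-2 if x ≡ 0 (mod 3) and x ≤ 3g-3; σ_b(x) = x if x ≥ 3g-2. Then σ_a and σ_b are well-defined bijections of {1,…,n}, and the composition σ_b ∘ σ_a is a cycle of length n (i.e., it is a cyclic permutation whose single orbit is all of {1,…,n}). -/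
/-- The permutation `σ_a` of `{1,…,n}` describing the origami `O_{g,n}`
(horizontal gluing), written as a function on `ℕ`. -/
def sigmaA (g n x : ℕ) : ℕ :=
  if x % 3 = 1 ∧ x ≤ 3 * g - 5 then x + 3
  else if x % 3 ≠ 1 ∧ x ≤ 3 * g - 3 then x
  else if 3 * g - 2 ≤ x ∧ x ≤ n - 1 then x + 1
  else 1

/-- The permutation `σ_b` of `{1,…,n}` describing the origami `O_{g,n}`
(vertical gluing), written as a function on `ℕ`. -/
def sigmaB (g x : ℕ) : ℕ :=
  if x % 3 ≠ 0 ∧ x ≤ 3 * g - 3 then x + 1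
  else if x % 3 = 0 ∧ x ≤ 3 * g - 3 then x - 2
  else x

/-- The orbit of `1` under `sigmaB ∘ sigmaA`. -/
def orb (g n k : ℕ) : ℕ :=
  if k = 0 then 1
  else if k ≤ 3 * g - 6 then (if k % 3 = 0 then k + 1 else k + 4)
  else if k ≤ n - 3 then k + 3
  else if k = n - 2 then 2 else 3

set_option maxHeartbeats 2000000 in
lemma tau_step (g n k : ℕ) (hg : 3 ≤ g) (hn : 3 * g - 2 ≤ n) (hk : k + 1 < n) :
    sigmaB g (sigmaA g n (orb g n k)) = orb g n (k + 1) := by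
  rcases (by omega : k = 0 ∨
      (1 ≤ k ∧ k + 1 ≤ 3 * g - 6 ∧ k % 3 = 0) ∨
      (1 ≤ k ∧ k + 1 ≤ 3 * g - 6 ∧ k % 3 = 1) ∨
      (1 ≤ k ∧ k + 1 ≤ 3 * g - 6 ∧ k % 3 = 2) ∨
      (1 ≤ k ∧ k ≤ 3 * g - 6 ∧ 3 * g - 6 < k + 1) ∨
      (3 * g - 6 < k ∧ k + 1 ≤ n - 3) ∨
      (3 * g - 6 < k ∧ k ≤ n - 3 ∧ n - 3 < k + 1) ∨
      (3 * g - 6 < k ∧ n - 3 < k ∧ k = n - 2)) with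
    h | h | h | h | h | h | h | h
  · have e0 : orb g n k = 1 := by unfold orb; split_ifs <;> first | omega | contradiction | simp_all | tauto
    have e1 : orb g n (k + 1) = 5 := by unfold orb; split_ifs <;> first | omega | contradiction | simp_all | tauto
    rw [e0, e1]; unfold sigmaA sigmaB; split_ifs <;> first | omega | contradiction | simp_all | tauto
  · have e0 : orb g n k = k + 1 := by unfold orb; split_ifs <;> first | omega | contradiction | simp_all | tauto
    have e1 : orb g n (k + 1) = k + 5 := by unfold orb; split_ifs <;> first | omega | contradiction | simp_all | tauto
    rw [e0, e1]; unfold sigmaA sigmaB; split_ifs <;> first | omega | contradiction | simp_all | tauto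
  · have e0 : orb g n k = k + 4 := by unfold orb; split_ifs <;> first | omega | contradiction | simp_all | tauto
    have e1 : orb g n (k + 1) = k + 5 := by unfold orb; split_ifs <;> first | omega | contradiction | simp_all | tauto
    rw [e0, e1]; unfold sigmaA sigmaB; split_ifs <;> first | omega | contradiction | simp_all | tauto
  · have e0 : orb g n k = k + 4 := by unfold orb; split_ifs <;> first | omega | contradiction | simp_all | tauto
    have e1 : orb g n (k + 1) = k + 2 := by unfold orb; split_ifs <;> first | omega | contradiction | simp_all | tauto
    rw [e0, e1]; unfold sigmaA sigmaB; split_ifs <;> first | omega | contradiction | simp_all | tauto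
  · have e0 : orb g n k = k + 1 := by unfold orb; split_ifs <;> first | omega | contradiction | simp_all | tauto
    have e1 : orb g n (k + 1) = k + 4 := by unfold orb; split_ifs <;> first | omega | contradiction | simp_all | tauto
    rw [e0, e1]; unfold sigmaA sigmaB; split_ifs <;> first | omega | contradiction | simp_all | tauto
  · have e0 : orb g n k = k + 3 := by unfold orb; split_ifs <;> first | omega | contradiction | simp_all | tauto
    have e1 : orb g n (k + 1) = k + 4 := by unfold orb; split_ifs <;> first | omega | contradiction | simp_all | tauto
    rw [e0, e1]; unfold sigmaA sigmaB; split_ifs <;> first | omega | contradiction | simp_all | tauto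
  · have e0 : orb g n k = k + 3 := by unfold orb; split_ifs <;> first | omega | contradiction | simp_all | tauto
    have e1 : orb g n (k + 1) = 2 := by unfold orb; split_ifs <;> first | omega | contradiction | simp_all | tauto
    rw [e0, e1]; unfold sigmaA sigmaB; split_ifs <;> first | omega | contradiction | simp_all | tauto
  · have e0 : orb g n k = 2 := by unfold orb; split_ifs <;> first | omega | contradiction | simp_all | tauto
    have e1 : orb g n (k + 1) = 3 := by unfold orb; split_ifs <;> first | omega | contradiction | simp_all | tauto
    rw [e0, e1]; unfold sigmaA sigmaB; split_ifs <;> first | omega | contradiction | simp_all | tauto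

lemma tau_last (g n : ℕ) (hg : 3 ≤ g) (hn : 3 * g - 2 ≤ n) :
    sigmaB g (sigmaA g n (orb g n (n - 1))) = 1 := by
  have e0 : orb g n (n - 1) = 3 := by unfold orb; split_ifs <;> first | omega | contradiction | simp_all | tauto
  rw [e0]; unfold sigmaA sigmaB; split_ifs <;> first | omega | contradiction | simp_all | tauto

lemma orb_surj (g n x : ℕ) (hg : 3 ≤ g) (hn : 3 * g - 2 ≤ n)
    (hx1 : 1 ≤ x) (hx2 : x ≤ n) : ∃ k, k < n ∧ orb g n k = x := by
  refine ⟨if x = 1 then 0 else if x = 2 then n - 2 else if x = 3 then n - 1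
    else if x ≤ 3 * g - 3 then (if x % 3 = 1 then x - 1 else x - 4) else x - 3,
    ?_, ?_⟩
  · split_ifs <;> first | omega | contradiction | simp_all | tauto
  · split_ifs <;> (unfold orb; split_ifs <;> first | omega | contradiction | simp_all | tauto)
lemma sigmaA_bijOn (g n : ℕ) (hg : 3 ≤ g) (hn : 3 * g - 2 ≤ n) :
    Set.BijOn (sigmaA g n) (Set.Icc 1 n) (Set.Icc 1 n) := by
  refine ⟨?_, ?_, ?_⟩
  · intro x hx
    simp only [Set.mem_Icc] at *
    unfold sigmaA; split_ifs <;> first | omega | contradiction | simp_all | tauto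
  · intro x hx y hy h
    simp only [Set.mem_Icc] at hx hy
    unfold sigmaA at h
    split_ifs at h <;> first | omega | contradiction | simp_all | tauto
  · intro y hy
    simp only [Set.mem_Icc] at hy
    refine ⟨if y = 1 then n else if y ≤ 3 * g - 2 then (if y % 3 = 1 then y - 3 else y)
      else y - 1, ?_, ?_⟩
    · simp only [Set.mem_Icc]
      split_ifs <;> first | omega | contradiction | simp_all | tauto
    · unfold sigmaA
      split_ifs <;> first | omega | contradiction | simp_all | tauto

lemma sigmaB_bijOn (g n : ℕ) (hg : 3 ≤ g) (hn : 3 * g - 2 ≤ n) :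
    Set.BijOn (sigmaB g) (Set.Icc 1 n) (Set.Icc 1 n) := by
  refine ⟨?_, ?_, ?_⟩
  · intro x hx
    simp only [Set.mem_Icc] at *
    unfold sigmaB; split_ifs <;> first | omega | contradiction | simp_all | tauto
  · intro x hx y hy h
    simp only [Set.mem_Icc] at hx hy
    unfold sigmaB at h
    split_ifs at h <;> first | omega | contradiction | simp_all | tauto
  · intro y hy
    simp only [Set.mem_Icc] at hy
    refine ⟨if y % 3 ≠ 1 ∧ y ≤ 3 * g - 3 then y - 1
      else if y % 3 = 1 ∧ y ≤ 3 * g - 5 then y + 2 else y, ?_, ?_⟩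
    · simp only [Set.mem_Icc]
      split_ifs <;> first | omega | contradiction | simp_all | tauto
    · unfold sigmaB
      split_ifs <;> first | omega | contradiction | simp_all | tauto

theorem sigmaB_comp_sigmaA_is_n_cycle (g n : ℕ) (hg : 3 ≤ g) (hn : 3 * g - 2 ≤ n) :
    Set.BijOn (sigmaA g n) (Set.Icc 1 n) (Set.Icc 1 n) ∧
    Set.BijOn (sigmaB g) (Set.Icc 1 n) (Set.Icc 1 n) ∧
    ∀ x ∈ Set.Icc 1 n, ∀ y ∈ Set.Icc 1 n,
      ∃ k : ℕ, (sigmaB g ∘ sigmaA g n)^[k] x = y := by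
  refine ⟨sigmaA_bijOn g n hg hn, sigmaB_bijOn g n hg hn, ?_⟩
  have hiter : ∀ k, k < n → (sigmaB g ∘ sigmaA g n)^[k] 1 = orb g n k := by
    intro k
    induction k with
    | zero => intro _; simp [orb]
    | succ k ih =>
      intro h
      rw [Function.iterate_succ_apply', ih (by omega)]
      simpa using tau_step g n k hg hn (by omega)
  have hper : (sigmaB g ∘ sigmaA g n)^[n] 1 = 1 := by
    have hn1 : n - 1 + 1 = n := by omega
    have h2 : (sigmaB g ∘ sigmaA g n)^[n - 1 + 1] 1 = 1 := by
      rw [Function.iterate_succ_apply', hiter (n - 1) (by omega)]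
      simpa using tau_last g n hg hn
    rwa [hn1] at h2
  have hpow : ∀ t, (sigmaB g ∘ sigmaA g n)^[n * t] 1 = 1 := by
    intro t
    induction t with
    | zero => simp
    | succ t ih => rw [Nat.mul_succ, Function.iterate_add_apply, hper, ih]
  intro x hx y hy
  simp only [Set.mem_Icc] at hx hy
  obtain ⟨i, hi, hxi⟩ := orb_surj g n x hg hn hx.1 hx.2
  obtain ⟨j, hj, hyj⟩ := orb_surj g n y hg hn hy.1 hy.2
  have hτi : (sigmaB g ∘ sigmaA g n)^[i] 1 = x := (hiter i hi).trans hxi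
  have hτj : (sigmaB g ∘ sigmaA g n)^[j] 1 = y := (hiter j hj).trans hyj
  refine ⟨j + n * (i + 1) - i, ?_⟩
  have hN : n ≤ n * (i + 1) := Nat.le_mul_of_pos_right n (by omega)
  have hk : (j + n * (i + 1) - i) + i = j + n * (i + 1) := by omega
  rw [← hτi, ← Function.iterate_add_apply, hk, Function.iterate_add_apply,
    hpow (i + 1), hτj]
end

section
/- Let g ≥ 3 and n ≥ 3g-2 be integers and let σ_a and σ_b be the permutations of {1,…,n} defined by: σ_a(x) = x+3 if x ≡ 1 (mod 3) and x ≤ 3g-5; σ_a(x) = x if x ≢ 1 (mod 3) and x ≤ 3g-3; σ_a(x) = x+1 if 3g-2 ≤ x ≤ n-1; σ_a(n) = 1; and σ_b(x) = x+1 if x ≢ 0 (mod 3) and x ≤ 3g-3; σ_b(x) = x-2 if x ≡ 0 (mod 3) and x ≤ 3g-3; σ_b(x) = x if x ≥ 3g-2. Then the composition σ_b ∘ σ_b ∘ σ_a is a cycle of length n (i.e., it is a cyclic permutation whose single orbit is all of {1,…,n}). -/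
lemma step1 (g n x : ℕ) (hg : 3 ≤ g) (h1 : x % 3 = 1) (h2 : x ≤ 3*g-8) :
    (sigmaB g ∘ sigmaB g ∘ sigmaA g n) x = x + 5 := by
  simp only [Function.comp_apply, sigmaA, sigmaB]
  split_ifs <;> omega

lemma step2 (g n : ℕ) (hg : 3 ≤ g) :
    (sigmaB g ∘ sigmaB g ∘ sigmaA g n) (3*g-5) = 3*g-2 := by
  simp only [Function.comp_apply, sigmaA, sigmaB]
  split_ifs <;> omega

lemma step3 (g n x : ℕ) (hg : 3 ≤ g) (h1 : x % 3 ≠ 1) (h2 : 2 ≤ x) (h3 : x ≤ 3*g-3) :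
    (sigmaB g ∘ sigmaB g ∘ sigmaA g n) x = x - 1 := by
  simp only [Function.comp_apply, sigmaA, sigmaB]
  split_ifs <;> omega

lemma step4 (g n x : ℕ) (hg : 3 ≤ g) (h2 : 3*g-2 ≤ x) (h3 : x ≤ n-1) :
    (sigmaB g ∘ sigmaB g ∘ sigmaA g n) x = x + 1 := by
  simp only [Function.comp_apply, sigmaA, sigmaB]
  split_ifs <;> omega

lemma step5 (g n : ℕ) (hg : 3 ≤ g) (hn : 3*g-2 ≤ n) :
    (sigmaB g ∘ sigmaB g ∘ sigmaA g n) n = 3 := by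
  simp only [Function.comp_apply, sigmaA, sigmaB]
  split_ifs <;> omega

theorem sigmaB_sq_comp_sigmaA_is_n_cycle (g n : ℕ) (hg : 3 ≤ g) (hn : 3 * g - 2 ≤ n) :
    ∀ x ∈ Set.Icc 1 n, ∀ y ∈ Set.Icc 1 n,
      ∃ k : ℕ, (sigmaB g ∘ sigmaB g ∘ sigmaA g n)^[k] x = y := by
  intro x hx y hy
  simp only [Set.mem_Icc] at hx hy
  set F := sigmaB g ∘ sigmaB g ∘ sigmaA g n with hF
  -- helper steps
  have rstep : ∀ z w : ℕ, F z = w → (∃ k, F^[k] 1 = z) → ∃ k, F^[k] 1 = w := by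
    rintro z w h ⟨k, hk⟩
    exact ⟨k + 1, by rw [Function.iterate_succ_apply', hk, h]⟩
  have sstep : ∀ z w : ℕ, F z = w → (∃ k, F^[k] w = 1) → ∃ k, F^[k] z = 1 := by
    rintro z w h ⟨k, hk⟩
    exact ⟨k + 1, by rw [Function.iterate_succ_apply, h, hk]⟩
  have rconv : ∀ a b : ℕ, a = b → (∃ k, F^[k] 1 = a) → ∃ k, F^[k] 1 = b := by
    rintro a b rfl h; exact h
  have sconv : ∀ a b : ℕ, a = b → (∃ k, F^[k] a = 1) → ∃ k, F^[k] b = 1 := by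
    rintro a b rfl h; exact h
  ---------------------------------------------------------------
  -- Reachability from 1 (forward direction)
  ---------------------------------------------------------------
  have R1 : ∃ k, F^[k] 1 = 1 := ⟨0, rfl⟩
  have Rblock : ∀ j, 1 ≤ j → j ≤ g - 2 →
      (∃ k, F^[k] 1 = 3*j+1) ∧ (∃ k, F^[k] 1 = 3*j+2) ∧ (∃ k, F^[k] 1 = 3*j+3) := by
    intro j hj1
    induction j, hj1 using Nat.le_induction with
    | base =>
      intro _
      have R6 : ∃ k, F^[k] 1 = 6 :=
        rstep 1 6 ((step1 g n 1 hg (by omega) (by omega)).trans (by omega)) R1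
      have R5 : ∃ k, F^[k] 1 = 5 :=
        rstep 6 5 ((step3 g n 6 hg (by omega) (by omega) (by omega)).trans (by omega)) R6
      have R4 : ∃ k, F^[k] 1 = 4 :=
        rstep 5 4 ((step3 g n 5 hg (by omega) (by omega) (by omega)).trans (by omega)) R5
      exact ⟨rconv 4 _ (by omega) R4, rconv 5 _ (by omega) R5, rconv 6 _ (by omega) R6⟩
    | succ j hj ih =>
      intro h
      obtain ⟨r1, _, _⟩ := ih (by omega)
      have R3' : ∃ k, F^[k] 1 = 3*(j+1)+3 :=
        rstep (3*j+1) (3*(j+1)+3)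
          ((step1 g n (3*j+1) hg (by omega) (by omega)).trans (by omega)) r1
      have R2' : ∃ k, F^[k] 1 = 3*(j+1)+2 :=
        rstep (3*(j+1)+3) (3*(j+1)+2)
          ((step3 g n (3*(j+1)+3) hg (by omega) (by omega) (by omega)).trans (by omega)) R3'
      have R1' : ∃ k, F^[k] 1 = 3*(j+1)+1 :=
        rstep (3*(j+1)+2) (3*(j+1)+1)
          ((step3 g n (3*(j+1)+2) hg (by omega) (by omega) (by omega)).trans (by omega)) R2'
      exact ⟨R1', R2', R3'⟩
  have Rg2 : ∃ k, F^[k] 1 = 3*g-2 := by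
    obtain ⟨r1, _, _⟩ := Rblock (g-2) (by omega) (by omega)
    exact rstep (3*g-5) (3*g-2) (step2 g n hg) (rconv _ (3*g-5) (by omega) r1)
  have Rtail : ∀ d, 3*g-2+d ≤ n → ∃ k, F^[k] 1 = 3*g-2+d := by
    intro d
    induction d with
    | zero => intro _; exact rconv _ _ (by omega) Rg2
    | succ d ih =>
      intro h
      exact rstep (3*g-2+d) (3*g-2+(d+1))
        ((step4 g n (3*g-2+d) hg (by omega) (by omega)).trans (by omega)) (ih (by omega))
  have Rhigh : ∀ z, 3*g-2 ≤ z → z ≤ n → ∃ k, F^[k] 1 = z := by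
    intro z h1 h2
    exact rconv _ _ (by omega) (Rtail (z - (3*g-2)) (by omega))
  have R3 : ∃ k, F^[k] 1 = 3 :=
    rstep n 3 (step5 g n hg hn) (Rhigh n (by omega) le_rfl)
  have R2 : ∃ k, F^[k] 1 = 2 :=
    rstep 3 2 ((step3 g n 3 hg (by omega) (by omega) (by omega)).trans (by omega)) R3
  have Rall : ∀ z, 1 ≤ z → z ≤ n → ∃ k, F^[k] 1 = z := by
    intro z h1 h2
    rcases (by omega :
        z = 1 ∨ z = 2 ∨ z = 3 ∨ (4 ≤ z ∧ z ≤ 3*g-3) ∨ (3*g-2 ≤ z)) with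
      h | h | h | ⟨ha, hb⟩ | h
    · exact rconv 1 z h.symm R1
    · exact rconv 2 z h.symm R2
    · exact rconv 3 z h.symm R3
    · obtain ⟨j, hj⟩ : ∃ j, 1 ≤ j ∧ j ≤ g-2 ∧ 3*j+1 ≤ z ∧ z ≤ 3*j+3 :=
        ⟨(z-1)/3, by omega⟩
      obtain ⟨r1, r2, r3⟩ := Rblock j hj.1 hj.2.1
      rcases (by omega : z = 3*j+1 ∨ z = 3*j+2 ∨ z = 3*j+3) with h | h | h
      · exact rconv _ z h.symm r1
      · exact rconv _ z h.symm r2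
      · exact rconv _ z h.symm r3
    · exact Rhigh z h h2
  ---------------------------------------------------------------
  -- Reachability to 1 (backward direction)
  ---------------------------------------------------------------
  have S1 : ∃ k, F^[k] 1 = 1 := ⟨0, rfl⟩
  have S2 : ∃ k, F^[k] 2 = 1 :=
    sstep 2 1 ((step3 g n 2 hg (by omega) (by omega) (by omega)).trans (by omega)) S1
  have S3 : ∃ k, F^[k] 3 = 1 :=
    sstep 3 2 ((step3 g n 3 hg (by omega) (by omega) (by omega)).trans (by omega)) S2
  have Stail : ∀ d, d ≤ n - (3*g-2) → ∃ k, F^[k] (n - d) = 1 := by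
    intro d
    induction d with
    | zero => intro _; exact sconv n _ (by omega) (sstep n 3 (step5 g n hg hn) S3)
    | succ d ih =>
      intro h
      exact sstep (n-(d+1)) (n-d)
        ((step4 g n (n-(d+1)) hg (by omega) (by omega)).trans (by omega)) (ih (by omega))
  have Shigh : ∀ z, 3*g-2 ≤ z → z ≤ n → ∃ k, F^[k] z = 1 := by
    intro z h1 h2
    exact sconv _ _ (by omega) (Stail (n - z) (by omega))
  have S35 : ∃ k, F^[k] (3*g-5) = 1 :=
    sstep (3*g-5) (3*g-2) (step2 g n hg) (Shigh (3*g-2) le_rfl (by omega))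
  have S34 : ∃ k, F^[k] (3*g-4) = 1 :=
    sstep (3*g-4) (3*g-5) ((step3 g n (3*g-4) hg (by omega) (by omega) (by omega)).trans (by omega)) S35
  have S33 : ∃ k, F^[k] (3*g-3) = 1 :=
    sstep (3*g-3) (3*g-4) ((step3 g n (3*g-3) hg (by omega) (by omega) (by omega)).trans (by omega)) S34
  have Sblock : ∀ d, d ≤ g - 3 →
      (∃ k, F^[k] (3*(g-2-d)+1) = 1) ∧ (∃ k, F^[k] (3*(g-2-d)+2) = 1) ∧
      (∃ k, F^[k] (3*(g-2-d)+3) = 1) := by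
    intro d
    induction d with
    | zero =>
      intro _
      exact ⟨sconv _ _ (by omega) S35, sconv _ _ (by omega) S34, sconv _ _ (by omega) S33⟩
    | succ d ih =>
      intro h
      obtain ⟨s1, s2, s3⟩ := ih (by omega)
      have T1 : ∃ k, F^[k] (3*(g-2-(d+1))+1) = 1 :=
        sstep (3*(g-2-(d+1))+1) (3*(g-2-d)+3)
          ((step1 g n (3*(g-2-(d+1))+1) hg (by omega) (by omega)).trans (by omega)) s3
      have T2 : ∃ k, F^[k] (3*(g-2-(d+1))+2) = 1 :=
        sstep (3*(g-2-(d+1))+2) (3*(g-2-(d+1))+1)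
          ((step3 g n (3*(g-2-(d+1))+2) hg (by omega) (by omega) (by omega)).trans (by omega)) T1
      have T3 : ∃ k, F^[k] (3*(g-2-(d+1))+3) = 1 :=
        sstep (3*(g-2-(d+1))+3) (3*(g-2-(d+1))+2)
          ((step3 g n (3*(g-2-(d+1))+3) hg (by omega) (by omega) (by omega)).trans (by omega)) T2
      exact ⟨T1, T2, T3⟩
  have Sall : ∀ z, 1 ≤ z → z ≤ n → ∃ k, F^[k] z = 1 := by
    intro z h1 h2
    rcases (by omega :
        z = 1 ∨ z = 2 ∨ z = 3 ∨ (4 ≤ z ∧ z ≤ 3*g-3) ∨ (3*g-2 ≤ z)) with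
      h | h | h | ⟨ha, hb⟩ | h
    · exact sconv 1 z h.symm S1
    · exact sconv 2 z h.symm S2
    · exact sconv 3 z h.symm S3
    · obtain ⟨j, hj⟩ : ∃ j, 1 ≤ j ∧ j ≤ g-2 ∧ 3*j+1 ≤ z ∧ z ≤ 3*j+3 :=
        ⟨(z-1)/3, by omega⟩
      obtain ⟨s1, s2, s3⟩ := Sblock (g-2-j) (by omega)
      have e : g-2-(g-2-j) = j := by omega
      rw [e] at s1 s2 s3
      rcases (by omega : z = 3*j+1 ∨ z = 3*j+2 ∨ z = 3*j+3) with h | h | h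
      · exact sconv _ z h.symm s1
      · exact sconv _ z h.symm s2
      · exact sconv _ z h.symm s3
    · exact Shigh z h h2
  ---------------------------------------------------------------
  obtain ⟨k1, hk1⟩ := Sall x hx.1 hx.2
  obtain ⟨k2, hk2⟩ := Rall y hy.1 hy.2
  exact ⟨k2 + k1, by rw [Function.iterate_add_apply, hk1, hk2]⟩
end
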